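/- arXiv:2311.09021 — 6 statements merged into one kernel-verified Lean document; each statement's English description precedes it below -/
import Mathlib

section
/- Let n, k, d ∈ ℕ with n ≥ k ≥ d ≥ 1, and let f = Σ_{ℓ=0}^d α_ℓ f_ℓ with α_0, …, α_d ∈ ℝ be a symmetric polynomial of degree at most d on {-1,1}^n. Then inf_{g ∈ P_{>k}^n} ‖f − g‖_1 ≤ Σ_{ℓ=0}^d |α_ℓ| · |c̃(k,ℓ)|. -/
open Finset
open scoped ENNReal

noncomputable section

/-- The Walsh function `w_S` on the discrete cube `{-1,1}^n`, where a point of the cube is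
encoded as `x : Fin n → Bool`, a coordinate `b : Bool` representing the real number
`if b then 1 else -1`. -/
def walsh (n : ℕ) (S : Finset (Fin n)) (x : Fin n → Bool) : ℝ :=
  ∏ i ∈ S, (if x i then (1 : ℝ) else -1)

/-- The Fourier--Walsh coefficient `f̂(S) = E[f ⬝ w_S]`. -/
def walshCoeff {n : ℕ} (f : (Fin n → Bool) → ℝ) (S : Finset (Fin n)) : ℝ :=
  (∑ x : Fin n → Bool, f x * walsh n S x) / 2 ^ n

/-- The mean `E f` of `f` with respect to the uniform probability measure on the cube. -/
def cubeMean {n : ℕ} (f : (Fin n → Bool) → ℝ) : ℝ :=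
  (∑ x : Fin n → Bool, f x) / 2 ^ n

/-- The `L_r` norm (`r ∈ [1,∞]`, encoded as `r : ℝ≥0∞`) of `f : {-1,1}^n → ℝ` with respect to
the uniform probability measure; `r = ∞` gives the sup norm. -/
def cubeNorm {n : ℕ} (r : ℝ≥0∞) (f : (Fin n → Bool) → ℝ) : ℝ :=
  if r = ⊤ then Finset.univ.sup' Finset.univ_nonempty (fun x => |f x|)
  else ((∑ x : Fin n → Bool, |f x| ^ r.toReal) / 2 ^ n) ^ (1 / r.toReal)

/-- `f ∈ 𝒫_I^n`: the Fourier--Walsh spectrum of `f` is contained in `I`. -/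
def spectrumIn {n : ℕ} (f : (Fin n → Bool) → ℝ) (I : Set ℕ) : Prop :=
  ∀ S : Finset (Fin n), S.card ∉ I → walshCoeff f S = 0

/-- The `L_r` distance of `f` from the tail space `𝒫_{>k}^n`. -/
def distFromTail {n : ℕ} (k : ℕ) (r : ℝ≥0∞) (f : (Fin n → Bool) → ℝ) : ℝ :=
  sInf {t : ℝ | ∃ g : (Fin n → Bool) → ℝ,
    spectrumIn g {j | k < j} ∧ t = cubeNorm r (fun x => f x - g x)}

/-- The coefficient `c(k,ℓ)` of `x^ℓ` in the `k`-th Chebyshev polynomial of the first kind. -/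
def chebC (k ℓ : ℕ) : ℝ := (Polynomial.Chebyshev.T ℝ k).coeff ℓ

/-- The modified Chebyshev coefficient `c̃(k,ℓ)`. -/
def chebCt (k ℓ : ℕ) : ℝ := if Even (k - ℓ) then chebC k ℓ else chebC (k - 1) ℓ

/-- The `ℓ`-th elementary symmetric multilinear polynomial on `{-1,1}^n`. -/
def elemSymPoly (n ℓ : ℕ) (x : Fin n → Bool) : ℝ :=
  ∑ S ∈ Finset.powersetCard ℓ (Finset.univ : Finset (Fin n)), walsh n S x

/-- The level-`ℓ` Rademacher projection `Rad_ℓ f`. -/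
def radProj {n : ℕ} (ℓ : ℕ) (f : (Fin n → Bool) → ℝ) (x : Fin n → Bool) : ℝ :=
  ∑ S ∈ Finset.powersetCard ℓ (Finset.univ : Finset (Fin n)), walshCoeff f S * walsh n S x

open Polynomial Real

lemma cube_sum_prod {n : ℕ} (F : Fin n → Bool → ℝ) :
    ∑ x : Fin n → Bool, ∏ i, F i (x i) = ∏ i, (F i false + F i true) := by
  classical
  have h := Finset.prod_univ_sum (fun _ : Fin n => (Finset.univ : Finset Bool)) (fun i b => F i b)
  rw [Fintype.piFinset_univ] at h
  rw [← h]
  congr 1; ext i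
  rw [Fintype.sum_bool]; ring

lemma walsh_eq_prod_univ {n : ℕ} (S : Finset (Fin n)) (x : Fin n → Bool) :
    walsh n S x = ∏ i, (if i ∈ S then (if x i then (1:ℝ) else -1) else 1) := by
  rw [walsh, Finset.prod_ite_mem, Finset.univ_inter]

/-- Walsh coefficient of the product function `x ↦ ∏ (1 + u x_i)` -/
lemma walshCoeff_prodFun {n : ℕ} (u : ℝ) (S : Finset (Fin n)) :
    walshCoeff (fun x => ∏ i, (1 + u * (if x i then (1:ℝ) else -1))) S = u ^ S.card := by
  classical
  have key : ∑ x : Fin n → Bool, (∏ i, (1 + u * (if x i then (1:ℝ) else -1))) * walsh n S x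
      = ∏ i : Fin n, (if i ∈ S then 2*u else 2) := by
    have : ∀ x : Fin n → Bool, (∏ i, (1 + u * (if x i then (1:ℝ) else -1))) * walsh n S x
        = ∏ i, ((1 + u * (if x i then (1:ℝ) else -1)) *
            (if i ∈ S then (if x i then (1:ℝ) else -1) else 1)) := by
      intro x
      rw [walsh_eq_prod_univ, Finset.prod_mul_distrib]
    simp_rw [this]
    rw [cube_sum_prod (fun i b => (1 + u * (if b then (1:ℝ) else -1)) *
        (if i ∈ S then (if b then (1:ℝ) else -1) else 1))]
    congr 1; ext i
    by_cases h : i ∈ S <;> simp [h] <;> ring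
  rw [walshCoeff, key]
  rw [← Finset.prod_filter_mul_prod_filter_not Finset.univ (· ∈ S)]
  rw [Finset.prod_congr rfl (fun i hi => if_pos (Finset.mem_filter.mp hi).2),
    Finset.prod_congr rfl (fun i hi => if_neg (Finset.mem_filter.mp hi).2)]
  rw [Finset.prod_const, Finset.prod_const]
  rw [Finset.filter_mem_eq_inter, Finset.univ_inter]
  have hcard : (Finset.univ.filter (fun i => i ∉ S)).card = n - S.card := by
    rw [Finset.filter_not, Finset.filter_mem_eq_inter, Finset.univ_inter,
      Finset.card_sdiff_of_subset (Finset.subset_univ S), Finset.card_univ, Fintype.card_fin]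
  rw [hcard]
  have hS : S.card ≤ n := by
    simpa using Finset.card_le_card (Finset.subset_univ S)
  rw [mul_pow]
  have h2 : (2:ℝ)^S.card * 2^(n - S.card) = 2^n := by
    rw [← pow_add]; congr 1; omega
  field_simp
  ring_nf
  rw [mul_assoc, h2]

lemma walshCoeff_walsh {n : ℕ} (T S : Finset (Fin n)) :
    walshCoeff (walsh n T) S = if T = S then 1 else 0 := by
  classical
  have key : ∑ x : Fin n → Bool, walsh n T x * walsh n S x
      = ∏ i : Fin n, (if i ∈ T then (if i ∈ S then (2:ℝ) else 0)
          else (if i ∈ S then 0 else 2)) := by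
    have : ∀ x : Fin n → Bool, walsh n T x * walsh n S x
        = ∏ i, ((if i ∈ T then (if x i then (1:ℝ) else -1) else 1) *
            (if i ∈ S then (if x i then (1:ℝ) else -1) else 1)) := by
      intro x
      rw [walsh_eq_prod_univ, walsh_eq_prod_univ, Finset.prod_mul_distrib]
    simp_rw [this]
    rw [cube_sum_prod (fun i b => (if i ∈ T then (if b then (1:ℝ) else -1) else 1) *
        (if i ∈ S then (if b then (1:ℝ) else -1) else 1))]
    congr 1; ext i
    by_cases h1 : i ∈ T <;> by_cases h2 : i ∈ S <;> simp [h1, h2] <;> ring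
  rw [walshCoeff, key]
  by_cases h : T = S
  · subst h
    simp only [if_pos]
    have : ∀ i : Fin n, (if i ∈ T then (if i ∈ T then (2:ℝ) else 0)
        else (if i ∈ T then 0 else 2)) = 2 := by
      intro i; by_cases h1 : i ∈ T <;> simp [h1]
    rw [Finset.prod_congr rfl (fun i _ => this i), Finset.prod_const, Finset.card_univ,
      Fintype.card_fin]
    field_simp
  · rw [if_neg h]
    have hex : ¬ ∀ i, i ∈ T ↔ i ∈ S := fun hh => h (Finset.ext hh)
    push_neg at hex
    obtain ⟨i, hi⟩ := hex
    have : (if i ∈ T then (if i ∈ S then (2:ℝ) else 0) else (if i ∈ S then 0 else 2)) = 0 := by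
      by_cases h1 : i ∈ T <;> by_cases h2 : i ∈ S <;>
        simp [h1, h2] at hi ⊢
    rw [Finset.prod_eq_zero (Finset.mem_univ i) this, zero_div]

lemma walshCoeff_sum {n : ℕ} {ι : Type*} (A : Finset ι) (f : ι → (Fin n → Bool) → ℝ)
    (S : Finset (Fin n)) :
    walshCoeff (fun x => ∑ a ∈ A, f a x) S = ∑ a ∈ A, walshCoeff (f a) S := by
  simp_rw [walshCoeff, Finset.sum_mul]
  rw [Finset.sum_comm, ← Finset.sum_div]

lemma walshCoeff_const_mul {n : ℕ} (c : ℝ) (f : (Fin n → Bool) → ℝ) (S : Finset (Fin n)) :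
    walshCoeff (fun x => c * f x) S = c * walshCoeff f S := by
  simp_rw [walshCoeff, mul_assoc, ← Finset.mul_sum, mul_div_assoc]

lemma walshCoeff_sub {n : ℕ} (f g : (Fin n → Bool) → ℝ) (S : Finset (Fin n)) :
    walshCoeff (fun x => f x - g x) S = walshCoeff f S - walshCoeff g S := by
  simp_rw [walshCoeff, sub_mul, Finset.sum_sub_distrib, sub_div]

lemma walshCoeff_elemSymPoly {n ℓ : ℕ} (S : Finset (Fin n)) :
    walshCoeff (elemSymPoly n ℓ) S = if S.card = ℓ then 1 else 0 := by
  classical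
  rw [show elemSymPoly n ℓ = fun x => ∑ T ∈ Finset.powersetCard ℓ (Finset.univ : Finset (Fin n)),
    walsh n T x from rfl]
  rw [walshCoeff_sum]
  simp_rw [walshCoeff_walsh]
  rw [Finset.sum_ite_eq' (Finset.powersetCard ℓ (Finset.univ : Finset (Fin n))) S (fun _ => (1:ℝ))]
  simp [Finset.mem_powersetCard_univ]

/-- coefficient signs of products of (X² - b) with b ≥ 0 -/
lemma even_prod_coeff {ι : Type*} [DecidableEq ι] (s : Finset ι) (b : ι → ℝ)
    (hb : ∀ i ∈ s, 0 ≤ b i) :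
    (∀ m, Odd m → (∏ i ∈ s, (X^2 - C (b i))).coeff m = 0) ∧
    (∀ r, 0 ≤ (-1:ℝ)^(s.card + r) * (∏ i ∈ s, (X^2 - C (b i))).coeff (2*r)) := by
  classical
  induction s using Finset.induction_on with
  | empty =>
    constructor
    · intro m hm
      simp only [prod_empty, coeff_one]
      rcases hm with ⟨t, ht⟩
      rw [if_neg (by omega)]
    · intro r
      simp only [prod_empty, coeff_one, card_empty]
      rcases Nat.eq_zero_or_pos r with h | h
      · subst h; norm_num
      · rw [if_neg (by omega), mul_zero]
  | @insert a s' ha ih =>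
    have hb' : ∀ i ∈ s', 0 ≤ b i := fun i hi => hb i (mem_insert_of_mem hi)
    have hba : 0 ≤ b a := hb a (mem_insert_self a s')
    obtain ⟨ih1, ih2⟩ := ih hb'
    rw [Finset.prod_insert ha]
    set P := ∏ i ∈ s', (X^2 - C (b i)) with hP
    have hcoeff : ∀ m, ((X^2 - C (b a)) * P).coeff m
        = (if 2 ≤ m then P.coeff (m - 2) else 0) - b a * P.coeff m := by
      intro m
      rw [sub_mul, Polynomial.coeff_sub, mul_comm (X^2 : ℝ[X]) P,
        Polynomial.coeff_mul_X_pow', Polynomial.coeff_C_mul]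
    constructor
    · intro m hm
      rw [hcoeff]
      rcases hm with ⟨t, ht⟩
      have h1 : P.coeff m = 0 := ih1 m ⟨t, ht⟩
      by_cases h2 : 2 ≤ m
      · have : Odd (m - 2) := ⟨t - 1, by omega⟩
        rw [if_pos h2, ih1 _ this, h1, mul_zero, sub_zero]
      · rw [if_neg h2, h1, mul_zero, sub_zero]
    · intro r
      rw [hcoeff, Finset.card_insert_of_notMem ha]
      rcases Nat.eq_zero_or_pos r with h | h
      · subst h
        rw [if_neg (by omega)]
        have := ih2 0
        rw [mul_zero] at this ⊢
        have hps : (0:ℝ) ≤ (-1:ℝ)^(s'.card) * P.coeff 0 := by simpa using this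
        calc (0:ℝ) ≤ b a * ((-1:ℝ)^(s'.card) * P.coeff 0) := by positivity
        _ = (-1:ℝ)^(s'.card + 1 + 0) * (0 - b a * P.coeff 0) := by
            rw [pow_add, pow_add]; ring
      · rw [if_pos (by omega)]
        have e1 := ih2 (r - 1)
        have e2 := ih2 r
        have hr2 : 2 * r - 2 = 2 * (r - 1) := by omega
        rw [hr2]
        have key1 : (-1:ℝ)^(s'.card+1+r) = (-1:ℝ)^(s'.card+(r-1)) := by
          have hh : s'.card+1+r = s'.card+(r-1)+2 := by omega
          rw [hh, pow_add]; norm_num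
        have key2 : s'.card+1+r = (s'.card+r)+1 := by omega
        calc (0:ℝ) ≤ (-1:ℝ)^(s'.card+(r-1)) * P.coeff (2*(r-1))
              + b a * ((-1:ℝ)^(s'.card+r) * P.coeff (2*r)) := by
              have : 0 ≤ b a * ((-1:ℝ)^(s'.card+r) * P.coeff (2*r)) := by positivity
              linarith
        _ = (-1:ℝ)^(s'.card + 1 + r) * (P.coeff (2*(r-1)) - b a * P.coeff (2*r)) := by
              have h2' : (-1:ℝ)^(s'.card+1+r) * (b a * P.coeff (2*r))
                  = -(b a * ((-1:ℝ)^(s'.card+r) * P.coeff (2*r))) := by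
                rw [key2, pow_succ]; ring
              rw [mul_sub, h2', key1]; ring

lemma rev_invariant_prod_split {N : ℕ} (s : Finset (Fin N)) (v : Fin N → ℝ)
    (hs : ∀ i ∈ s, Fin.rev i ∈ s) (hv : ∀ i, v (Fin.rev i) = -(v i)) :
    ∃ (q m : ℕ) (E : ℝ[X]), s.card = m + 2*q ∧
      (∀ r, Odd r → E.coeff r = 0) ∧
      (∀ r, 0 ≤ (-1:ℝ)^(q+r) * E.coeff (2*r)) ∧
      (∏ i ∈ s, (X - C (v i))) = X^m * E ∧
      m = (s.filter (fun i => i = Fin.rev i)).card := by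
  classical
  set P := s.filter (fun i => i < Fin.rev i) with hPdef
  set M := s.filter (fun i => i = Fin.rev i) with hMdef
  set N' := s.filter (fun i => Fin.rev i < i) with hNdef
  have eM : (s.filter (fun i => ¬ i < Fin.rev i)).filter (fun i => i = Fin.rev i) = M := by
    rw [Finset.filter_filter, hMdef]
    apply Finset.filter_congr
    intro x _
    constructor
    · rintro ⟨_, h2⟩; exact h2
    · intro h2; exact ⟨by rw [← h2]; exact lt_irrefl x, h2⟩
  have eN : (s.filter (fun i => ¬ i < Fin.rev i)).filter (fun i => ¬ i = Fin.rev i) = N' := by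
    rw [Finset.filter_filter, hNdef]
    apply Finset.filter_congr
    intro x _
    constructor
    · rintro ⟨h1, h2⟩
      rcases lt_trichotomy x (Fin.rev x) with h | h | h
      · exact absurd h h1
      · exact absurd h h2
      · exact h
    · intro h
      exact ⟨fun h' => absurd h (not_lt.mpr (le_of_lt h')), fun h' => by
        rw [← h'] at h; exact absurd h (lt_irrefl x)⟩
  have hsplit : ∀ (f : Fin N → ℝ[X]),
      ∏ i ∈ s, f i = (∏ i ∈ P, f i) * ((∏ i ∈ M, f i) * (∏ i ∈ N', f i)) := by
    intro f
    rw [← Finset.prod_filter_mul_prod_filter_not s (fun i => i < Fin.rev i) f]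
    congr 1
    rw [← Finset.prod_filter_mul_prod_filter_not
      (s.filter (fun i => ¬ i < Fin.rev i)) (fun i => i = Fin.rev i) f, eM, eN]
  have hmemNP : ∀ a ∈ N', Fin.rev a ∈ P := by
    intro a ha
    rw [hNdef, Finset.mem_filter] at ha
    rw [hPdef, Finset.mem_filter]
    exact ⟨hs a ha.1, by rw [Fin.rev_rev]; exact ha.2⟩
  have hmemPN : ∀ a ∈ P, Fin.rev a ∈ N' := by
    intro a ha
    rw [hPdef, Finset.mem_filter] at ha
    rw [hNdef, Finset.mem_filter]
    exact ⟨hs a ha.1, by rw [Fin.rev_rev]; exact ha.2⟩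
  have hNP : ∀ (g : Fin N → ℝ[X]), ∏ i ∈ N', g i = ∏ i ∈ P, g (Fin.rev i) :=
    fun g => Finset.prod_bij' (fun a _ => Fin.rev a) (fun a _ => Fin.rev a)
      (fun a ha => hmemNP a ha) (fun a ha => hmemPN a ha)
      (fun a _ => Fin.rev_rev a) (fun a _ => Fin.rev_rev a)
      (fun a _ => by rw [Fin.rev_rev])
  have hcardNP : N'.card = P.card :=
    Finset.card_bij' (fun a _ => Fin.rev a) (fun a _ => Fin.rev a)
      (fun a ha => hmemNP a ha) (fun a ha => hmemPN a ha)
      (fun a _ => Fin.rev_rev a) (fun a _ => Fin.rev_rev a)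
  have hMzero : ∀ i ∈ M, v i = 0 := by
    intro i hi
    rw [hMdef, Finset.mem_filter] at hi
    have := hv i
    rw [← hi.2] at this
    linarith
  have hMprod : ∏ i ∈ M, (X - C (v i)) = X ^ M.card := by
    rw [Finset.prod_congr rfl (fun i hi => by rw [hMzero i hi, map_zero, sub_zero]),
      Finset.prod_const]
  have hPN : (∏ i ∈ P, (X - C (v i))) * ∏ i ∈ N', (X - C (v i))
      = ∏ i ∈ P, (X^2 - C ((v i)^2)) := by
    rw [hNP, ← Finset.prod_mul_distrib]
    apply Finset.prod_congr rfl
    intro i _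
    rw [hv i, map_neg, sub_neg_eq_add]
    have : C ((v i)^2) = C (v i) ^ 2 := by rw [map_pow]
    rw [this]; ring
  refine ⟨P.card, M.card, ∏ i ∈ P, (X^2 - C ((v i)^2)), ?_, ?_, ?_, ?_, rfl⟩
  · have h1 := Finset.card_filter_add_card_filter_not (s := s)
      (p := fun i => i < Fin.rev i)
    have h2 := Finset.card_filter_add_card_filter_not
      (s := s.filter (fun i => ¬ i < Fin.rev i)) (p := fun i => i = Fin.rev i)
    rw [eM, eN] at h2
    have h1' : #P + #(Finset.filter (fun i => ¬ i < Fin.rev i) s) = #s := h1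
    omega
  · exact (even_prod_coeff P (fun i => (v i)^2) (fun i _ => sq_nonneg _)).1
  · exact (even_prod_coeff P (fun i => (v i)^2) (fun i _ => sq_nonneg _)).2
  · rw [hsplit (fun i => X - C (v i)), hMprod]
    have := hPN
    calc (∏ i ∈ P, (X - C (v i))) * ((X:ℝ[X]) ^ M.card * ∏ i ∈ N', (X - C (v i)))
        = (X:ℝ[X]) ^ M.card * ((∏ i ∈ P, (X - C (v i))) * ∏ i ∈ N', (X - C (v i))) := by ring
      _ = X ^ M.card * ∏ i ∈ P, (X^2 - C ((v i)^2)) := by rw [hPN]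

lemma neg_one_pow_congr_real (a b : ℕ) (h : a % 2 = b % 2) : (-1:ℝ)^a = (-1)^b := by
  rcases Nat.even_or_odd a with ha | ha
  · have hb : Even b := by
      rcases Nat.even_or_odd b with h' | h'
      · exact h'
      · exfalso; rw [Nat.even_iff] at ha; rw [Nat.odd_iff] at h'; omega
    rw [ha.neg_one_pow, hb.neg_one_pow]
  · have hb : Odd b := by
      rcases Nat.even_or_odd b with h' | h'
      · exfalso; rw [Nat.even_iff] at h'; rw [Nat.odd_iff] at ha; omega
      · exact h'
    rw [ha.neg_one_pow, hb.neg_one_pow]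

lemma natDegree_T_le : ∀ n : ℕ, (Polynomial.Chebyshev.T ℝ (n:ℤ)).natDegree ≤ n := by
  have key : ∀ n : ℕ, (Polynomial.Chebyshev.T ℝ (n:ℤ)).natDegree ≤ n ∧
      (Polynomial.Chebyshev.T ℝ ((n+1:ℕ):ℤ)).natDegree ≤ n+1 := by
    intro n
    induction n with
    | zero =>
      constructor
      · rw [show ((0:ℕ):ℤ) = 0 by norm_num, Polynomial.Chebyshev.T_zero]; simp
      · rw [show ((1:ℕ):ℤ) = 1 by norm_num, Polynomial.Chebyshev.T_one]
        simp [Polynomial.natDegree_X_le]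
    | succ n ih =>
      refine ⟨ih.2, ?_⟩
      have hcast : ((n+2:ℕ):ℤ) = (n:ℤ) + 2 := by push_cast; ring
      rw [hcast, Polynomial.Chebyshev.T_add_two]
      apply le_trans (Polynomial.natDegree_sub_le _ _)
      have h1 : (2 * X * Polynomial.Chebyshev.T ℝ ((n:ℤ)+1)).natDegree ≤ n + 2 := by
        apply le_trans (Polynomial.natDegree_mul_le)
        have hX : (2 * X : ℝ[X]).natDegree ≤ 1 := by
          apply le_trans (Polynomial.natDegree_mul_le)
          simp [Polynomial.natDegree_X_le]
        have h2 : (Polynomial.Chebyshev.T ℝ ((n:ℤ)+1)).natDegree ≤ n + 1 := by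
          have := ih.2
          rwa [show ((n+1:ℕ):ℤ) = (n:ℤ)+1 by push_cast; ring] at this
        omega
      have h3 : (Polynomial.Chebyshev.T ℝ (n:ℤ)).natDegree ≤ n := ih.1
      rw [max_le_iff]
      exact ⟨h1, by omega⟩
  exact fun n => (key n).1

lemma quad_core (K ℓ : ℕ) (hK : 1 ≤ K) (hl : 1 ≤ ℓ) (hlK : ℓ ≤ K) (hpar : (K - ℓ) % 2 = 0) :
    ∃ w u : Fin (K+1) → ℝ, (∀ m, |u m| ≤ 1) ∧
      (∀ j, j ≤ K → ∑ m, w m * u m ^ j = (if j = ℓ then (1:ℝ) else 0)) ∧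
      ∑ m, |w m| ≤ |(Polynomial.Chebyshev.T ℝ (K:ℤ)).coeff ℓ| := by
  classical
  have hKR : (0:ℝ) < K := by positivity
  set v : Fin (K+1) → ℝ := fun j => Real.cos ((j:ℕ) * π / K) with hvdef
  -- basic facts about the nodes
  have habs : ∀ m : Fin (K+1), |v m| ≤ 1 := fun m => Real.abs_cos_le_one _
  have htheta_mem : ∀ m : Fin (K+1), ((m:ℕ) * π / K) ∈ Set.Icc (0:ℝ) π := by
    intro m
    constructor
    · positivity
    · rw [div_le_iff₀ hKR]
      have hm : ((m:ℕ):ℝ) ≤ K := by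
        have := Fin.is_le m
        exact_mod_cast this
      nlinarith [Real.pi_pos]
  have hmono : ∀ i i' : Fin (K+1), i < i' → v i' < v i := by
    intro i i' hii
    apply Real.strictAntiOn_cos (htheta_mem i) (htheta_mem i')
    have hlt : ((i:ℕ):ℝ) < ((i':ℕ):ℝ) := by exact_mod_cast hii
    have hpi := Real.pi_pos
    have h2 := mul_lt_mul_of_pos_right (mul_lt_mul_of_pos_right hlt hpi) (inv_pos.mpr hKR)
    simpa [div_eq_mul_inv] using h2
  have hinj : Set.InjOn v ↑(univ : Finset (Fin (K+1))) := by
    intro a _ b _ hab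
    by_contra hne
    rcases lt_or_gt_of_ne hne with h | h
    · exact absurd hab (ne_of_gt (hmono a b h))
    · exact absurd hab (ne_of_gt (hmono b a h)).symm
  have hvrev : ∀ i : Fin (K+1), v (Fin.rev i) = -(v i) := by
    intro i
    have hle : (i:ℕ) ≤ K := Fin.is_le i
    have hval : ((Fin.rev i : Fin (K+1)) : ℕ) = K - (i:ℕ) := by
      rw [Fin.val_rev]; omega
    rw [hvdef]
    simp only [hval]
    have hcast : ((K - (i:ℕ) : ℕ):ℝ) = (K:ℝ) - (i:ℕ) := by
      push_cast [hle]; ring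
    rw [hcast]
    have harg : ((K:ℝ) - (i:ℕ)) * π / K = π - (i:ℕ) * π / K := by
      field_simp
    rw [harg, Real.cos_pi_sub]
  have hvalT : ∀ m : Fin (K+1), (Polynomial.Chebyshev.T ℝ (K:ℤ)).eval (v m) = (-1:ℝ)^(m:ℕ) := by
    intro m
    rw [hvdef]
    simp only
    rw [Polynomial.Chebyshev.T_real_cos]
    have harg : ((K:ℤ):ℝ) * ((m:ℕ) * π / K) = (m:ℕ) * π := by
      push_cast; field_simp
    rw [harg]
    have := Real.cos_nat_mul_pi_sub 0 (m:ℕ)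
    rw [sub_zero, Real.cos_zero, mul_one] at this
    exact this
  -- the weights
  set w : Fin (K+1) → ℝ := fun j => (Lagrange.basis univ v j).coeff ℓ with hwdef
  have interp : ∀ p : ℝ[X], p.natDegree ≤ K →
      p.coeff ℓ = ∑ j : Fin (K+1), p.eval (v j) * w j := by
    intro p hdeg
    have hcard : (#(univ : Finset (Fin (K+1)))) = K+1 := by
      rw [Finset.card_univ, Fintype.card_fin]
    have hdlt : p.degree < (#(univ : Finset (Fin (K+1))) : WithBot ℕ) := by
      rw [hcard]
      apply lt_of_le_of_lt (Polynomial.degree_le_natDegree)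
      exact_mod_cast Nat.lt_succ_of_le hdeg
    have h := Lagrange.eq_interpolate hinj hdlt
    conv_lhs => rw [h]
    rw [Lagrange.interpolate_apply, Polynomial.finset_sum_coeff]
    apply Finset.sum_congr rfl
    intro i _
    rw [Polynomial.coeff_C_mul]
  have moments : ∀ j, j ≤ K → ∑ m, w m * v m ^ j = (if j = ℓ then (1:ℝ) else 0) := by
    intro j hj
    have h := interp (X^j) (by rw [Polynomial.natDegree_X_pow]; exact hj)
    rw [Polynomial.coeff_X_pow] at h
    have h2 : ∑ m : Fin (K+1), w m * v m ^ j
        = ∑ m : Fin (K+1), (X^j : ℝ[X]).eval (v m) * w m := by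
      apply Finset.sum_congr rfl
      intro m _
      rw [Polynomial.eval_pow, Polynomial.eval_X, mul_comm]
    rw [h2, ← h]
    by_cases hje : j = ℓ
    · rw [if_pos hje, if_pos hje.symm]
    · rw [if_neg hje, if_neg (Ne.symm hje)]
  have hcheb : (Polynomial.Chebyshev.T ℝ (K:ℤ)).coeff ℓ
      = ∑ m : Fin (K+1), (-1:ℝ)^(m:ℕ) * w m := by
    rw [interp _ (natDegree_T_le K)]
    apply Finset.sum_congr rfl
    intro m _
    rw [hvalT]
  set ε : ℝ := (-1:ℝ)^((K - ℓ)/2) with hεdef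
  have hsign : ∀ m : Fin (K+1), 0 ≤ ε * ((-1:ℝ)^(m:ℕ) * w m) := by
    intro j
    set s := (univ : Finset (Fin (K+1))).erase j with hsdef
    have hbasis : Lagrange.basis univ v j
        = C (∏ i ∈ s, (v j - v i)⁻¹) * ∏ i ∈ s, (X - C (v i)) := by
      rw [Lagrange.basis]
      simp only [Lagrange.basisDivisor]
      rw [Finset.prod_mul_distrib, map_prod]
    set D := ∏ i ∈ s, (v j - v i) with hDdef
    set Q := ∏ i ∈ s, (X - C (v i)) with hQdef
    have hwj : w j = D⁻¹ * Q.coeff ℓ := by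
      rw [hwdef]
      simp only
      rw [hbasis, Polynomial.coeff_C_mul, Finset.prod_inv_distrib]
    have hsK : s.card = K := by
      rw [hsdef, Finset.card_erase_of_mem (Finset.mem_univ j), Finset.card_univ,
        Fintype.card_fin]
      omega
    -- sign of D
    have hDpos : 0 < (-1:ℝ)^(j:ℕ) * D := by
      have hsplit : s = Finset.Iio j ∪ Finset.Ioi j := by
        ext i
        rw [hsdef, Finset.mem_erase, Finset.mem_union, Finset.mem_Iio, Finset.mem_Ioi]
        constructor
        · rintro ⟨hne, -⟩; exact lt_or_gt_of_ne hne
        · rintro (h | h)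
          · exact ⟨ne_of_lt h, Finset.mem_univ i⟩
          · exact ⟨ne_of_gt h, Finset.mem_univ i⟩
      have hdisj : Disjoint (Finset.Iio j) (Finset.Ioi j) := by
        rw [Finset.disjoint_left]
        intro a ha hb
        rw [Finset.mem_Iio] at ha
        rw [Finset.mem_Ioi] at hb
        exact absurd (ha.trans hb) (lt_irrefl _)
      have p1 : 0 < ∏ i ∈ Finset.Iio j, (v i - v j) := by
        apply Finset.prod_pos
        intro i hi
        rw [Finset.mem_Iio] at hi
        have := hmono i j hi
        linarith
      have p2 : 0 < ∏ i ∈ Finset.Ioi j, (v j - v i) := by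
        apply Finset.prod_pos
        intro i hi
        rw [Finset.mem_Ioi] at hi
        have := hmono j i hi
        linarith
      have hneg : ∏ i ∈ Finset.Iio j, (v j - v i)
          = (-1:ℝ)^(j:ℕ) * ∏ i ∈ Finset.Iio j, (v i - v j) := by
        rw [Finset.prod_congr rfl (fun i _ => show v j - v i = (-1) * (v i - v j) by ring),
          Finset.prod_mul_distrib, Finset.prod_const, Fin.card_Iio]
      have hsq : (-1:ℝ)^(j:ℕ) * (-1:ℝ)^(j:ℕ) = 1 := by
        rw [← pow_add]
        exact Even.neg_one_pow ⟨(j:ℕ), rfl⟩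
      rw [hDdef, hsplit, Finset.prod_union hdisj, hneg]
      calc (0:ℝ) < (∏ i ∈ Finset.Iio j, (v i - v j)) * ∏ i ∈ Finset.Ioi j, (v j - v i) :=
            mul_pos p1 p2
        _ = (-1:ℝ)^(j:ℕ) * ((-1:ℝ)^(j:ℕ) * (∏ i ∈ Finset.Iio j, (v i - v j))
              * ∏ i ∈ Finset.Ioi j, (v j - v i)) := by
            rw [show ((-1:ℝ)^(j:ℕ) * ((-1:ℝ)^(j:ℕ) * (∏ i ∈ Finset.Iio j, (v i - v j))
              * ∏ i ∈ Finset.Ioi j, (v j - v i)))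
              = ((-1:ℝ)^(j:ℕ) * (-1:ℝ)^(j:ℕ)) * ((∏ i ∈ Finset.Iio j, (v i - v j))
              * ∏ i ∈ Finset.Ioi j, (v j - v i)) from by ring, hsq, one_mul]
    -- sign of Q.coeff ℓ
    have hQsgn : 0 ≤ ε * Q.coeff ℓ := by
      by_cases hc : j = Fin.rev j
      · -- center case
        have hs2 : ∀ i ∈ s, Fin.rev i ∈ s := by
          intro i hi
          rw [hsdef, Finset.mem_erase] at hi ⊢
          refine ⟨fun h => ?_, Finset.mem_univ _⟩
          rw [hc] at h
          exact hi.1 (Fin.rev_injective h)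
        obtain ⟨q, m, E, hcard, hodd, hsgn2, hfact, hm⟩ :=
          rev_invariant_prod_split s v hs2 hvrev
        have hjval : 2 * (j:ℕ) = K := by
          have := congrArg Fin.val hc
          rw [Fin.val_rev] at this
          omega
        have hm0 : m = 0 := by
          rw [hm, Finset.card_eq_zero, Finset.filter_eq_empty_iff]
          intro i hi
          intro hirev
          have hival : 2 * (i:ℕ) = K := by
            have := congrArg Fin.val hirev
            rw [Fin.val_rev] at this
            omega
          rw [hsdef, Finset.mem_erase] at hi
          exact hi.1 (Fin.ext (by omega))
        have hK2q : K = 2 * q := by omega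
        have hleven : ℓ % 2 = 0 := by omega
        have h2 := hsgn2 (ℓ/2)
        have hpareq : ((K - ℓ)/2) % 2 = (q + ℓ/2) % 2 := by omega
        have hQE : Q = E := by rw [hQdef, hfact, hm0, pow_zero, one_mul]
        have hcoeffeq : E.coeff ℓ = E.coeff (2*(ℓ/2)) := by
          congr 1; omega
        rw [hεdef, neg_one_pow_congr_real _ _ hpareq, hQE, hcoeffeq]
        exact h2
      · -- off-center case
        have hrevmem : Fin.rev j ∈ s :=
          Finset.mem_erase.mpr ⟨fun h => hc h.symm, Finset.mem_univ _⟩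
        set s' := s.erase (Fin.rev j) with hs'def
        have hQfact : Q = (X + C (v j)) * ∏ i ∈ s', (X - C (v i)) := by
          rw [hQdef]
          rw [← Finset.mul_prod_erase s (fun i => (X:ℝ[X]) - C (v i)) hrevmem]
          rw [hvrev j, map_neg, sub_neg_eq_add]
        have hs2 : ∀ i ∈ s', Fin.rev i ∈ s' := by
          intro i hi
          rw [hs'def, Finset.mem_erase, hsdef, Finset.mem_erase] at hi ⊢
          refine ⟨fun h => hi.2.1 (Fin.rev_injective h), fun h => ?_, Finset.mem_univ _⟩
          apply hi.1
          rw [← h, Fin.rev_rev]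
        obtain ⟨q, m, E, hcard, hodd, hsgn2, hfact, hm⟩ :=
          rev_invariant_prod_split s' v hs2 hvrev
        have hs'K : s'.card = K - 1 := by
          rw [hs'def, Finset.card_erase_of_mem hrevmem, hsK]
        have hKm : K - 1 = m + 2*q := by rw [← hs'K]; exact hcard
        have hcoeffQ : Q.coeff ℓ = (if m+1 ≤ ℓ then E.coeff (ℓ-(m+1)) else 0)
            + v j * (if m ≤ ℓ then E.coeff (ℓ-m) else 0) := by
          rw [hQfact, hfact]
          have hexp : (X + C (v j)) * ((X:ℝ[X])^m * E) = E * X^(m+1) + C (v j) * (E * X^m) := by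
            ring
          rw [hexp, Polynomial.coeff_add, Polynomial.coeff_C_mul,
            Polynomial.coeff_mul_X_pow', Polynomial.coeff_mul_X_pow']
        have hsecond : v j * (if m ≤ ℓ then E.coeff (ℓ-m) else 0) = 0 := by
          by_cases hml : m ≤ ℓ
          · rw [if_pos hml, hodd (ℓ-m) (Nat.odd_iff.mpr (by omega)), mul_zero]
          · rw [if_neg hml, mul_zero]
        by_cases hml : m + 1 ≤ ℓ
        · have hev : (ℓ - (m+1)) % 2 = 0 := by omega
          have hrw : ℓ - (m+1) = 2 * ((ℓ - (m+1))/2) := by omega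
          have h2 := hsgn2 ((ℓ - (m+1))/2)
          have hpareq : ((K - ℓ)/2) % 2 = (q + (ℓ - (m+1))/2) % 2 := by omega
          rw [hcoeffQ, hsecond, add_zero, if_pos hml, hεdef,
            neg_one_pow_congr_real _ _ hpareq]
          rw [show E.coeff (ℓ-(m+1)) = E.coeff (2*((ℓ-(m+1))/2)) from by congr 1]
          exact h2
        · rw [hcoeffQ, hsecond, add_zero, if_neg hml, mul_zero]
    have hDinvpos : 0 < (-1:ℝ)^(j:ℕ) * D⁻¹ := by
      have h2 := inv_pos.mpr hDpos
      rw [mul_inv, ← inv_pow, inv_neg_one] at h2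
      exact h2
    calc (0:ℝ) ≤ ((-1:ℝ)^(j:ℕ) * D⁻¹) * (ε * Q.coeff ℓ) :=
          mul_nonneg hDinvpos.le hQsgn
      _ = ε * ((-1:ℝ)^(j:ℕ) * w j) := by rw [hwj]; ring
  refine ⟨w, v, habs, moments, ?_⟩
  have habs_eq : ∀ m : Fin (K+1), |w m| = ε * ((-1:ℝ)^(m:ℕ) * w m) := by
    intro m
    have h1 : |ε * ((-1:ℝ)^(m:ℕ) * w m)| = |w m| := by
      simp [hεdef, abs_mul, abs_pow]
    rw [← h1, abs_of_nonneg (hsign m)]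
  calc ∑ m : Fin (K+1), |w m| = ∑ m : Fin (K+1), ε * ((-1:ℝ)^(m:ℕ) * w m) :=
      Finset.sum_congr rfl (fun m _ => habs_eq m)
    _ = ε * ∑ m : Fin (K+1), (-1:ℝ)^(m:ℕ) * w m := by rw [Finset.mul_sum]
    _ = ε * (Polynomial.Chebyshev.T ℝ (K:ℤ)).coeff ℓ := by rw [hcheb]
    _ ≤ |ε * (Polynomial.Chebyshev.T ℝ (K:ℤ)).coeff ℓ| := le_abs_self _
    _ = |(Polynomial.Chebyshev.T ℝ (K:ℤ)).coeff ℓ| := by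
        rw [abs_mul, hεdef, abs_pow, abs_neg, abs_one, one_pow, one_mul]

lemma coeffT0 (m : ℕ) : (Polynomial.Chebyshev.T ℝ ((2*m:ℕ):ℤ)).coeff 0 = (-1:ℝ)^m := by
  induction m with
  | zero => simp [Polynomial.Chebyshev.T_zero]
  | succ n ih =>
    have hcast : ((2*(n+1):ℕ):ℤ) = ((2*n:ℕ):ℤ) + 2 := by push_cast; ring
    rw [hcast, Polynomial.Chebyshev.T_add_two]
    rw [Polynomial.coeff_sub, Polynomial.mul_coeff_zero]
    have h1 : (2 * X : ℝ[X]).coeff 0 = 0 := by simp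
    rw [h1, zero_mul, zero_sub, ih, pow_succ]
    ring

lemma quad_full (k : ℕ) (hk : 1 ≤ k) (ℓ : ℕ) :
    ∃ (M : ℕ) (w u : Fin M → ℝ),
      (∀ m, |u m| ≤ 1) ∧
      (∀ j, j ≤ k → ∑ m, w m * u m ^ j = (if j = ℓ then (1:ℝ) else 0)) ∧
      ∑ m, |w m| ≤ |chebCt k ℓ| := by
  classical
  rcases Nat.eq_zero_or_pos ℓ with hl0 | hl1
  · -- ℓ = 0 : use the point mass at 0
    subst hl0
    refine ⟨1, fun _ => 1, fun _ => 0, by norm_num, ?_, ?_⟩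
    · intro j hj
      rw [Fin.sum_univ_one, one_mul, zero_pow_eq]
    · rw [Fin.sum_univ_one, abs_one]
      have : |chebCt k 0| = 1 := by
        rw [chebCt, Nat.sub_zero]
        rcases Nat.even_or_odd k with he | ho
        · rw [if_pos he]
          obtain ⟨c, hc⟩ := he
          rw [chebC, show k = 2*c from by omega, coeffT0]
          rw [abs_pow, abs_neg, abs_one, one_pow]
        · rw [if_neg (Nat.not_even_iff_odd.mpr ho)]
          have : ∃ c, k - 1 = 2*c := ⟨(k-1)/2, by rcases ho with ⟨c,hc⟩; omega⟩
          obtain ⟨c, hc⟩ := this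
          rw [chebC, hc, coeffT0, abs_pow, abs_neg, abs_one, one_pow]
      rw [this]
  rcases Nat.lt_or_ge k ℓ with hkl | hlk
  · -- ℓ > k : empty measure
    refine ⟨0, Fin.elim0, Fin.elim0, fun m => m.elim0, ?_, ?_⟩
    · intro j hj
      rw [Finset.univ_eq_empty, Finset.sum_empty, if_neg (by omega)]
    · rw [Finset.univ_eq_empty, Finset.sum_empty]
      exact abs_nonneg _
  · -- main case 1 ≤ ℓ ≤ k
    set K := if (k - ℓ) % 2 = 0 then k else k - 1 with hKdef
    have hK1 : 1 ≤ K := by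
      rw [hKdef]; split <;> omega
    have hlK : ℓ ≤ K := by
      rw [hKdef]; split <;> omega
    have hpar : (K - ℓ) % 2 = 0 := by
      rw [hKdef]; split <;> omega
    obtain ⟨w, u, hu, hmom, htv⟩ := quad_core K ℓ hK1 hl1 hlK hpar
    have hcheb_eq : |(Polynomial.Chebyshev.T ℝ (K:ℤ)).coeff ℓ| = |chebCt k ℓ| := by
      rw [chebCt]
      by_cases hpk : Even (k - ℓ)
      · rw [if_pos hpk, chebC]
        have : K = k := by rw [hKdef, if_pos (Nat.even_iff.mp hpk)]
        rw [this]
      · rw [if_neg hpk, chebC]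
        have : K = k - 1 := by
          rw [hKdef, if_neg]
          intro h
          exact hpk (Nat.even_iff.mpr h)
        rw [this]
    -- symmetrized family on the sum type
    set W' : Fin (K+1) ⊕ Fin (K+1) → ℝ :=
      Sum.elim (fun m => w m / 2) (fun m => (-1:ℝ)^ℓ * w m / 2) with hW'def
    set U' : Fin (K+1) ⊕ Fin (K+1) → ℝ := Sum.elim u (fun m => -u m) with hU'def
    refine ⟨(K+1) + (K+1), W' ∘ finSumFinEquiv.symm, U' ∘ finSumFinEquiv.symm, ?_, ?_, ?_⟩
    · intro m
      rcases h : finSumFinEquiv.symm m with a | a <;>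
        simp only [Function.comp_apply, h, hU'def, Sum.elim_inl, Sum.elim_inr, abs_neg] <;>
        exact hu a
    · intro j hj
      have hsum : ∑ m : Fin ((K+1)+(K+1)),
          (W' ∘ finSumFinEquiv.symm) m * (U' ∘ finSumFinEquiv.symm) m ^ j
          = ∑ x : Fin (K+1) ⊕ Fin (K+1), W' x * U' x ^ j := by
        apply Fintype.sum_equiv finSumFinEquiv.symm
        intro m
        rfl
      rw [hsum, Fintype.sum_sum_type]
      simp only [hW'def, hU'def, Sum.elim_inl, Sum.elim_inr]
      have hterm : ∀ m : Fin (K+1), w m / 2 * u m ^ j + (-1:ℝ)^ℓ * w m / 2 * (-u m) ^ j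
          = (1 + (-1:ℝ)^(ℓ+j))/2 * (w m * u m ^ j) := by
        intro m
        rw [neg_pow, pow_add]
        ring
      rw [← Finset.sum_add_distrib]
      rw [Finset.sum_congr rfl (fun m _ => hterm m), ← Finset.mul_sum]
      by_cases hp : (ℓ + j) % 2 = 0
      · have h1 : (-1:ℝ)^(ℓ+j) = 1 := Even.neg_one_pow (Nat.even_iff.mpr hp)
        have hjK : j ≤ K := by
          rw [hKdef]; split <;> omega
        rw [h1, hmom j hjK]
        norm_num
      · have h1 : (-1:ℝ)^(ℓ+j) = -1 := Odd.neg_one_pow (Nat.odd_iff.mpr (by omega))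
        rw [h1, if_neg (by omega)]
        norm_num
    · have hsum : ∑ m : Fin ((K+1)+(K+1)), |(W' ∘ finSumFinEquiv.symm) m|
          = ∑ x : Fin (K+1) ⊕ Fin (K+1), |W' x| := by
        apply Fintype.sum_equiv finSumFinEquiv.symm
        intro m
        rfl
      rw [hsum, Fintype.sum_sum_type]
      simp only [hW'def, Sum.elim_inl, Sum.elim_inr]
      have habs2 : ∀ m : Fin (K+1), |(-1:ℝ)^ℓ * w m / 2| = |w m| / 2 := by
        intro m
        rw [abs_div, abs_mul, abs_pow, abs_neg, abs_one, one_pow, one_mul]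
        norm_num
      have habs1 : ∀ m : Fin (K+1), |w m / 2| = |w m| / 2 := by
        intro m
        rw [abs_div]
        norm_num
      rw [Finset.sum_congr rfl (fun m _ => habs1 m), Finset.sum_congr rfl (fun m _ => habs2 m),
        ← Finset.sum_add_distrib]
      have : ∀ m : Fin (K+1), |w m|/2 + |w m|/2 = |w m| := fun m => by ring
      rw [Finset.sum_congr rfl (fun m _ => this m), ← hcheb_eq]
      exact htv

lemma cubeNorm_one {n : ℕ} (F : (Fin n → Bool) → ℝ) :
    cubeNorm 1 F = (∑ x : Fin n → Bool, |F x|) / 2 ^ n := by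
  rw [cubeNorm, if_neg (by simp)]
  simp [ENNReal.toReal_one, Real.rpow_one]

/-- for a symmetric polynomial `f = Σ_{ℓ=0}^d α_ℓ f_ℓ` of degree at most `d`,
with `n ≥ k ≥ d ≥ 1`, the `L_1` distance from `𝒫_{>k}^n` is at most
`Σ_{ℓ=0}^d |α_ℓ| |c̃(k,ℓ)|`. -/
theorem stmt_6 (n k d : ℕ) (hd : 1 ≤ d) (hdk : d ≤ k) (hkn : k ≤ n) (α : ℕ → ℝ) :
    distFromTail k 1 (fun x => ∑ ℓ ∈ Finset.range (d + 1), α ℓ * elemSymPoly n ℓ x) ≤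
      ∑ ℓ ∈ Finset.range (d + 1), |α ℓ| * |chebCt k ℓ| := by
  classical
  have hk : 1 ≤ k := le_trans hd hdk
  choose M w u hu hmom htv using quad_full k hk
  set f : (Fin n → Bool) → ℝ :=
    fun x => ∑ ℓ ∈ Finset.range (d + 1), α ℓ * elemSymPoly n ℓ x with hfdef
  set h : (Fin n → Bool) → ℝ := fun x => ∑ ℓ ∈ Finset.range (d + 1),
      α ℓ * ∑ m : Fin (M ℓ), w ℓ m * ∏ i, (1 + u ℓ m * (if x i then (1:ℝ) else -1)) with hhdef
  set g : (Fin n → Bool) → ℝ := fun x => f x - h x with hgdef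
  -- positivity of the product factors
  have hprod_nonneg : ∀ (ℓ : ℕ) (m : Fin (M ℓ)) (x : Fin n → Bool),
      0 ≤ ∏ i, (1 + u ℓ m * (if x i then (1:ℝ) else -1)) := by
    intro ℓ m x
    apply Finset.prod_nonneg
    intro i _
    have := abs_le.mp (hu ℓ m)
    by_cases hx : x i <;> simp [hx] <;> linarith
  have hprod_sum : ∀ (ℓ : ℕ) (m : Fin (M ℓ)),
      ∑ x : Fin n → Bool, ∏ i, (1 + u ℓ m * (if x i then (1:ℝ) else -1)) = 2 ^ n := by
    intro ℓ m
    rw [cube_sum_prod (fun i b => 1 + u ℓ m * (if b then (1:ℝ) else -1))]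
    have : ∀ i : Fin n, (1 + u ℓ m * (if false then (1:ℝ) else -1))
        + (1 + u ℓ m * (if true then (1:ℝ) else -1)) = 2 := by
      intro i; simp; ring
    rw [Finset.prod_congr rfl (fun i _ => this i), Finset.prod_const, Finset.card_univ,
      Fintype.card_fin]
  -- spectrum claim
  have hspec : spectrumIn g {j | k < j} := by
    intro S hS
    have hcard : S.card ≤ k := by simpa using hS
    rw [hgdef]
    rw [walshCoeff_sub]
    have hf : walshCoeff f S
        = ∑ ℓ ∈ Finset.range (d + 1), α ℓ * (if S.card = ℓ then (1:ℝ) else 0) := by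
      rw [hfdef, walshCoeff_sum]
      apply Finset.sum_congr rfl
      intro ℓ _
      rw [walshCoeff_const_mul, walshCoeff_elemSymPoly]
    have hh : walshCoeff h S
        = ∑ ℓ ∈ Finset.range (d + 1), α ℓ * (if S.card = ℓ then (1:ℝ) else 0) := by
      rw [hhdef, walshCoeff_sum]
      apply Finset.sum_congr rfl
      intro ℓ _
      rw [walshCoeff_const_mul]
      congr 1
      rw [walshCoeff_sum]
      have : ∀ m : Fin (M ℓ), walshCoeff
          (fun x => w ℓ m * ∏ i, (1 + u ℓ m * (if x i then (1:ℝ) else -1))) S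
          = w ℓ m * u ℓ m ^ S.card := by
        intro m
        rw [walshCoeff_const_mul, walshCoeff_prodFun]
      rw [Finset.sum_congr rfl (fun m _ => this m), hmom ℓ S.card hcard]
    rw [hf, hh, sub_self]
  -- norm bound
  have hnorm : cubeNorm 1 h ≤ ∑ ℓ ∈ Finset.range (d + 1), |α ℓ| * |chebCt k ℓ| := by
    rw [cubeNorm_one]
    rw [div_le_iff₀ (by positivity : (0:ℝ) < 2 ^ n)]
    have hstep : ∀ x : Fin n → Bool, |h x| ≤ ∑ ℓ ∈ Finset.range (d + 1),
        |α ℓ| * ∑ m : Fin (M ℓ), |w ℓ m| * ∏ i, (1 + u ℓ m * (if x i then (1:ℝ) else -1)) := by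
      intro x
      rw [hhdef]
      apply le_trans (Finset.abs_sum_le_sum_abs _ _)
      apply Finset.sum_le_sum
      intro ℓ _
      rw [abs_mul]
      apply mul_le_mul_of_nonneg_left _ (abs_nonneg _)
      apply le_trans (Finset.abs_sum_le_sum_abs _ _)
      apply Finset.sum_le_sum
      intro m _
      rw [abs_mul, abs_of_nonneg (hprod_nonneg ℓ m x)]
    calc ∑ x : Fin n → Bool, |h x|
        ≤ ∑ x : Fin n → Bool, ∑ ℓ ∈ Finset.range (d + 1),
            |α ℓ| * ∑ m : Fin (M ℓ), |w ℓ m| * ∏ i, (1 + u ℓ m *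
              (if x i then (1:ℝ) else -1)) := Finset.sum_le_sum (fun x _ => hstep x)
      _ = ∑ ℓ ∈ Finset.range (d + 1), |α ℓ| * ∑ m : Fin (M ℓ), |w ℓ m| * 2 ^ n := by
          rw [Finset.sum_comm]
          apply Finset.sum_congr rfl
          intro ℓ _
          rw [← Finset.mul_sum]
          congr 1
          rw [Finset.sum_comm]
          apply Finset.sum_congr rfl
          intro m _
          rw [← Finset.mul_sum, hprod_sum ℓ m]
      _ ≤ (∑ ℓ ∈ Finset.range (d + 1), |α ℓ| * |chebCt k ℓ|) * 2 ^ n := by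
          rw [Finset.sum_mul]
          apply Finset.sum_le_sum
          intro ℓ _
          rw [mul_assoc]
          apply mul_le_mul_of_nonneg_left _ (abs_nonneg _)
          rw [← Finset.sum_mul]
          apply mul_le_mul_of_nonneg_right (htv ℓ) (by positivity)
  -- conclude via csInf
  have hmem : cubeNorm 1 (fun x => f x - g x) ∈ {t : ℝ | ∃ g' : (Fin n → Bool) → ℝ,
      spectrumIn g' {j | k < j} ∧ t = cubeNorm 1 (fun x => f x - g' x)} := ⟨g, hspec, rfl⟩
  have hbdd : BddBelow {t : ℝ | ∃ g' : (Fin n → Bool) → ℝ,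
      spectrumIn g' {j | k < j} ∧ t = cubeNorm 1 (fun x => f x - g' x)} := by
    refine ⟨0, ?_⟩
    rintro t ⟨g', -, rfl⟩
    rw [cubeNorm_one]
    positivity
  have heq : (fun x => f x - g x) = h := by
    funext x
    rw [hgdef]
    ring
  refine le_trans (csInf_le hbdd hmem) ?_
  rw [heq]
  exact hnorm
end
end

section
/- Let n ≥ k ≥ ℓ ≥ 0. Every function f : {-1,1}^n → ℝ of degree at most k satisfies ‖Rad_ℓ f‖_∞ ≤ |c̃(k,ℓ)| · ‖f‖_∞. -/
open Finset
open scoped ENNReal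
open Polynomial Real

noncomputable section

lemma chebT_natDegree_le : ∀ k : ℕ, (Polynomial.Chebyshev.T ℝ k).natDegree ≤ k := by
  have H : ∀ k : ℕ, (Polynomial.Chebyshev.T ℝ k).natDegree ≤ k ∧
      (Polynomial.Chebyshev.T ℝ (k+1)).natDegree ≤ k + 1 := by
    intro k
    induction k with
    | zero => constructor <;> simp [Polynomial.Chebyshev.T_zero, Polynomial.Chebyshev.T_one]
    | succ m ih =>
      refine ⟨ih.2, ?_⟩
      have h2 : ((m : ℤ) + 1 + 1) = (m : ℤ) + 2 := by ring
      have : Polynomial.Chebyshev.T ℝ ((m:ℤ) + 2)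
          = 2 * X * Polynomial.Chebyshev.T ℝ ((m:ℤ) + 1) - Polynomial.Chebyshev.T ℝ (m:ℤ) :=
        Polynomial.Chebyshev.T_add_two ℝ (m:ℤ)
      have hcast : ((m + 1 : ℕ) : ℤ) + 1 = (m:ℤ) + 2 := by push_cast; ring
      rw [hcast, this]
      refine le_trans (natDegree_sub_le _ _) ?_
      have h1 : (2 * X * Polynomial.Chebyshev.T ℝ ((m:ℤ)+1)).natDegree ≤ m + 2 := by
        refine le_trans natDegree_mul_le ?_
        have : (2 * X : ℝ[X]).natDegree ≤ 1 := by
          refine le_trans natDegree_mul_le ?_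
          simp
        have ih2 : (Polynomial.Chebyshev.T ℝ ((m:ℤ)+1)).natDegree ≤ m + 1 := by
          exact ih.2
        omega
      have h2' : (Polynomial.Chebyshev.T ℝ (m:ℤ)).natDegree ≤ m + 2 := le_trans ih.1 (by omega)
      simp only [max_le_iff]
      exact ⟨h1, h2'⟩
  exact fun k => (H k).1

lemma prodSq_natDegree_le {ι : Type*} (B : Finset ι) (b : ι → ℝ) :
    (∏ i ∈ B, ((X:ℝ[X])^2 - C (b i))).natDegree ≤ 2 * B.card := by
  refine le_trans (natDegree_prod_le _ _) ?_
  rw [Finset.card_eq_sum_ones, mul_comm, Finset.sum_mul]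
  refine Finset.sum_le_sum fun i _ => ?_
  refine le_trans (natDegree_sub_le _ _) ?_
  simp

lemma prodSq_coeff_odd {ι : Type*} (B : Finset ι) (b : ι → ℝ) :
    ∀ ℓ, ℓ % 2 = 1 → (∏ i ∈ B, ((X:ℝ[X])^2 - C (b i))).coeff ℓ = 0 := by
  classical
  induction B using Finset.induction_on with
  | empty => intro ℓ hℓ; simp [coeff_one]; omega
  | insert _ _ hnotmem =>
    rename_i a B' ih
    intro ℓ hℓ
    rw [Finset.prod_insert hnotmem]
    have key : ((X:ℝ[X])^2 - C (b a)) * (∏ i ∈ B', ((X:ℝ[X])^2 - C (b i)))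
        = (∏ i ∈ B', ((X:ℝ[X])^2 - C (b i))) * X^2
          - (∏ i ∈ B', ((X:ℝ[X])^2 - C (b i))) * C (b a) := by ring
    rw [key, coeff_sub, coeff_mul_C, coeff_mul_X_pow']
    rcases Nat.lt_or_ge ℓ 2 with h | h
    · simp only [if_neg (by omega : ¬ 2 ≤ ℓ)]
      rw [ih ℓ hℓ]; ring
    · simp only [if_pos h]
      rw [ih ℓ hℓ, ih (ℓ - 2) (by omega)]; ring

lemma prodSq_coeff_sign {ι : Type*} (B : Finset ι) (b : ι → ℝ) (hb : ∀ i ∈ B, 0 ≤ b i) :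
    ∀ s, 0 ≤ (-1:ℝ)^(B.card - s) * (∏ i ∈ B, ((X:ℝ[X])^2 - C (b i))).coeff (2*s) := by
  classical
  induction B using Finset.induction_on with
  | empty =>
    intro s
    rcases Nat.eq_zero_or_pos s with rfl | hs
    · simp
    · simp only [Finset.prod_empty, Finset.card_empty, coeff_one]
      split <;> norm_num
  | insert _ _ hnotmem =>
    rename_i a B' ih
    intro s
    have hb' : ∀ i ∈ B', 0 ≤ b i := fun i hi => hb i (Finset.mem_insert_of_mem hi)
    have hba : 0 ≤ b a := hb a (Finset.mem_insert_self a B')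
    have ihs := ih hb'
    rw [Finset.prod_insert hnotmem, Finset.card_insert_of_notMem hnotmem]
    have key : ((X:ℝ[X])^2 - C (b a)) * (∏ i ∈ B', ((X:ℝ[X])^2 - C (b i)))
        = (∏ i ∈ B', ((X:ℝ[X])^2 - C (b i))) * X^2
          - (∏ i ∈ B', ((X:ℝ[X])^2 - C (b i))) * C (b a) := by ring
    rw [key, coeff_sub, coeff_mul_C, coeff_mul_X_pow']
    set Q := ∏ i ∈ B', ((X:ℝ[X])^2 - C (b i)) with hQ
    rcases Nat.lt_or_ge B'.card s with hbig | hsmall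
    · -- s > card B' : coefficients vanish
      have hz1 : Q.coeff (2*s) = 0 := by
        refine coeff_eq_zero_of_natDegree_lt ?_
        exact lt_of_le_of_lt (prodSq_natDegree_le B' b) (by omega)
      rcases Nat.lt_or_ge s (B'.card + 1) with h | h
      · omega
      · rcases Nat.eq_or_lt_of_le h with heq | h2
        · -- s = card B' + 1 : term coeff (2s-2) has exponent 0
          have hthis := ihs B'.card
          simp only [Nat.sub_self, pow_zero, one_mul] at hthis
          rw [if_pos (by omega : 2 ≤ 2 * s), hz1]
          have he : 2 * s - 2 = 2 * B'.card := by omega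
          rw [he]
          have hexp : B'.card + 1 - s = 0 := by omega
          rw [hexp, pow_zero, one_mul]
          nlinarith [hthis]
        · have hz2 : Q.coeff (2*s - 2) = 0 := by
            refine coeff_eq_zero_of_natDegree_lt ?_
            exact lt_of_le_of_lt (prodSq_natDegree_le B' b) (by omega)
          rcases Nat.lt_or_ge (2*s) 2 with h3 | h3
          · omega
          · rw [if_pos h3, hz1, hz2]; simp
    · -- s ≤ card B'
      rcases Nat.eq_zero_or_pos s with rfl | hs
      · simp only [Nat.mul_zero, if_neg (by omega : ¬ (2:ℕ) ≤ 0)]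
        have h0 := ihs 0
        simp only [Nat.sub_zero] at h0 ⊢
        rw [pow_succ]
        nlinarith [h0]
      · rw [if_pos (by omega : 2 ≤ 2*s)]
        have h1 := ihs (s - 1)
        have h2 := ihs s
        have he1 : 2*s - 2 = 2*(s-1) := by omega
        have he2 : B'.card - (s - 1) = B'.card + 1 - s := by omega
        have he3 : B'.card + 1 - s = (B'.card - s) + 1 := by omega
        rw [he1]
        rw [he2] at h1
        rw [he3] at h1 ⊢
        rw [pow_succ] at *
        nlinarith [h1, h2]

def cnode (k j : ℕ) : ℝ := Real.cos (j * Real.pi / k)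

lemma cnode_anti {k i j : ℕ} (hij : j < i) (hik : i ≤ k) : cnode k i < cnode k j := by
  have hk : 0 < (k:ℝ) := by
    have : 1 ≤ k := by omega
    exact_mod_cast by omega
  have hpi := Real.pi_pos
  apply Real.strictAntiOn_cos
  · constructor
    · positivity
    · rw [div_le_iff₀ hk]
      have : (j:ℝ) ≤ k := by exact_mod_cast by omega
      nlinarith
  · constructor
    · positivity
    · rw [div_le_iff₀ hk]
      have : (i:ℝ) ≤ k := by exact_mod_cast hik
      nlinarith
  · have hj : (j:ℝ) < i := by exact_mod_cast hij
    rw [div_lt_div_iff₀ hk hk]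
    nlinarith [mul_pos (mul_pos (sub_pos.mpr hj) Real.pi_pos) hk]

lemma cnode_reflect {k i : ℕ} (hk : 1 ≤ k) (hik : i ≤ k) : cnode k (k - i) = - cnode k i := by
  unfold cnode
  have hk' : (k:ℝ) ≠ 0 := by positivity
  have hc : ((k - i : ℕ) : ℝ) = (k:ℝ) - i := by
    push_cast [Nat.cast_sub hik]; ring
  rw [hc]
  have : ((k:ℝ) - i) * Real.pi / k = Real.pi - (i:ℝ) * Real.pi / k := by
    field_simp
  rw [this, Real.cos_pi_sub]

lemma cnode_mid {k j : ℕ} (hk : 1 ≤ k) (h : 2*j = k) : cnode k j = 0 := by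
  unfold cnode
  have : (j:ℝ) * Real.pi / k = Real.pi / 2 := by
    have h2 : (k:ℝ) = 2*j := by exact_mod_cast h.symm
    have hj : (j:ℝ) ≠ 0 := by
      have : 1 ≤ j := by omega
      exact_mod_cast by omega
    rw [h2]
    field_simp
  rw [this, Real.cos_pi_div_two]

lemma T_eval_cnode {k j : ℕ} (hjk : j ≤ k) :
    (Polynomial.Chebyshev.T ℝ k).eval (cnode k j) = (-1:ℝ)^j := by
  unfold cnode
  rw [Polynomial.Chebyshev.T_real_cos]
  rcases Nat.eq_zero_or_pos k with rfl | hk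
  · interval_cases j
    norm_num
  · have hk' : (k:ℝ) ≠ 0 := by positivity
    have : ((k:ℤ):ℝ) * ((j:ℝ) * Real.pi / k) = (j:ℝ) * Real.pi := by
      push_cast; field_simp
    rw [this]
    have h0 := Real.cos_int_mul_pi_sub 0 (j:ℤ)
    simp only [sub_zero, Real.cos_zero, mul_one] at h0
    push_cast at h0
    rw [h0]
    norm_cast

lemma mem_image_reflect {k : ℕ} {B : Finset ℕ} (hB : ∀ a ∈ B, a ≤ k) {i : ℕ} :
    i ∈ B.image (k - ·) ↔ ∃ a, a ∈ B ∧ k - a = i := by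
  simp [Finset.mem_image]

lemma prod_pair_union {k : ℕ} (hk : 1 ≤ k) (B : Finset ℕ) (hB : ∀ i ∈ B, 2*i < k) :
    ∏ i ∈ B ∪ B.image (k - ·), ((X:ℝ[X]) - C (cnode k i))
      = ∏ i ∈ B, ((X:ℝ[X])^2 - C ((cnode k i)^2)) := by
  have hdisj : Disjoint B (B.image (k - ·)) := by
    rw [Finset.disjoint_left]
    intro i hi hi'
    rw [Finset.mem_image] at hi'
    obtain ⟨a, ha, rfl⟩ := hi'
    have := hB a ha
    have := hB (k - a) hi
    omega
  rw [Finset.prod_union hdisj]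
  rw [Finset.prod_image (by intro a ha b hb hab; simp only at hab; have := hB a ha; have := hB b hb; omega)]
  rw [← Finset.prod_mul_distrib]
  refine Finset.prod_congr rfl fun i hi => ?_
  rw [cnode_reflect hk (by have := hB i hi; omega)]
  rw [map_neg, sq (cnode k i), C_mul]
  ring

lemma erase_eq_case2 {k j : ℕ} (hj : 2*j = k) :
    (Finset.range (k+1)).erase j
      = Finset.range ((k+1)/2) ∪ (Finset.range ((k+1)/2)).image (k - ·) := by
  ext i
  simp only [Finset.mem_erase, Finset.mem_range, Finset.mem_union, Finset.mem_image]
  constructor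
  · rintro ⟨hne, hlt⟩
    rcases Nat.lt_or_ge (2*i) k with h | h
    · exact Or.inl (by omega)
    · exact Or.inr ⟨k - i, by omega, by omega⟩
  · rintro (h | ⟨a, ha, rfl⟩) <;> omega

lemma erase_eq_case1 {k j : ℕ} (hj : j ≤ k) (hne : 2*j ≠ k) :
    (Finset.range (k+1)).erase j
      = (((Finset.range ((k+1)/2)).erase (min j (k-j))
          ∪ ((Finset.range ((k+1)/2)).erase (min j (k-j))).image (k - ·)))
        ∪ ({k - j} ∪ (Finset.range (k+1)).filter (fun i => 2*i = k)) := by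
  ext i
  simp only [Finset.mem_erase, Finset.mem_range, Finset.mem_union, Finset.mem_image,
    Finset.mem_singleton, Finset.mem_filter]
  constructor
  · rintro ⟨hne2, hlt⟩
    rcases Nat.lt_or_ge (2*i) k with h | h
    · by_cases hm : i = min j (k - j)
      · -- then i = k - j (since i ≠ j)
        exact Or.inr (Or.inl (by omega))
      · exact Or.inl (Or.inl ⟨hm, by omega⟩)
    · rcases Nat.eq_or_lt_of_le h with h2 | h2
      · exact Or.inr (Or.inr ⟨by omega, by omega⟩)
      · by_cases hm : i = k - j
        · exact Or.inr (Or.inl hm)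
        · exact Or.inl (Or.inr ⟨k - i, ⟨by omega, by omega⟩, by omega⟩)
  · rintro ((⟨h1, h2⟩ | ⟨a, ⟨ha1, ha2⟩, rfl⟩) | (h | ⟨h1, h2⟩)) <;> omega

lemma filter_mid_even {k : ℕ} (hk : k % 2 = 0) :
    (Finset.range (k+1)).filter (fun i => 2*i = k) = {k/2} := by
  ext i
  simp only [Finset.mem_filter, Finset.mem_range, Finset.mem_singleton]
  omega

lemma filter_mid_odd {k : ℕ} (hk : k % 2 = 1) :
    (Finset.range (k+1)).filter (fun i => 2*i = k) = ∅ := by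
  ext i
  simp only [Finset.mem_filter, Finset.mem_range, Finset.notMem_empty, iff_false, not_and]
  omega

lemma coeff_mul_X_add_C (Q : ℝ[X]) (c : ℝ) (d : ℕ) :
    (Q * ((X:ℝ[X]) + C c)).coeff d
      = (if 1 ≤ d then Q.coeff (d-1) else 0) + c * Q.coeff d := by
  rw [mul_add, coeff_add, coeff_mul_C, ← pow_one (X:ℝ[X]), coeff_mul_X_pow']
  ring

lemma coeff_P_sign {k ℓ j : ℕ} (hpar : k % 2 = ℓ % 2) (hl : ℓ ≤ k) (hj : j ≤ k) :
    0 ≤ (-1:ℝ)^((k-ℓ)/2)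
      * (∏ i ∈ (Finset.range (k+1)).erase j, ((X:ℝ[X]) - C (cnode k i))).coeff ℓ := by
  rcases Nat.eq_zero_or_pos k with rfl | hk
  · have : ℓ = 0 := by omega
    subst this
    have : j = 0 := by omega
    subst this
    have : (Finset.range 1).erase 0 = ∅ := by decide
    rw [this]
    simp
  by_cases hmid : 2*j = k
  · -- Case B : j is the middle node
    rw [erase_eq_case2 hmid, prod_pair_union hk _ (by intro i hi; simp at hi; omega)]
    have hle : ℓ % 2 = 0 := by omega
    obtain ⟨s, rfl⟩ : ∃ s, ℓ = 2*s := ⟨ℓ/2, by omega⟩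
    have hsign := prodSq_coeff_sign (Finset.range ((k+1)/2)) (fun i => (cnode k i)^2)
      (fun i _ => sq_nonneg _) s
    rw [Finset.card_range] at hsign
    have : (k+1)/2 - s = (k - 2*s)/2 := by omega
    rwa [this] at hsign
  · -- Case A
    set j0 := min j (k - j) with hj0
    set B := (Finset.range ((k+1)/2)).erase j0 with hB
    have hBsub : ∀ i ∈ B, 2*i < k := by intro i hi; simp [hB, Finset.mem_erase] at hi; omega
    have hdisj1 : Disjoint (B ∪ B.image (k - ·))
        ({k - j} ∪ (Finset.range (k+1)).filter (fun i => 2*i = k)) := by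
      rw [Finset.disjoint_left]
      intro i hi hi'
      simp only [Finset.mem_union, Finset.mem_image, Finset.mem_singleton,
        Finset.mem_filter, Finset.mem_range, hB, Finset.mem_erase] at hi hi'
      rcases hi with ⟨h1, h2⟩ | ⟨a, ⟨ha1, ha2⟩, rfl⟩ <;> rcases hi' with h | ⟨h3, h4⟩ <;> omega
    have hdisj2 : Disjoint ({k - j} : Finset ℕ)
        ((Finset.range (k+1)).filter (fun i => 2*i = k)) := by
      rw [Finset.disjoint_left]
      intro i hi hi'
      simp only [Finset.mem_singleton] at hi
      simp only [Finset.mem_filter, Finset.mem_range] at hi'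
      omega
    rw [erase_eq_case1 hj hmid, Finset.prod_union hdisj1, Finset.prod_union hdisj2,
      prod_pair_union hk B hBsub, Finset.prod_singleton,
      cnode_reflect hk hj, map_neg, sub_neg_eq_add]
    set Q := ∏ i ∈ B, ((X:ℝ[X])^2 - C ((cnode k i)^2)) with hQdef
    have hj0mem : j0 ∈ Finset.range ((k+1)/2) := by
      rw [Finset.mem_range, hj0]
      omega
    have hcardB : B.card = (k+1)/2 - 1 := by
      rw [hB, Finset.card_erase_of_mem hj0mem, Finset.card_range]
    have hQodd := prodSq_coeff_odd B (fun i => (cnode k i)^2)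
    have hQsign := prodSq_coeff_sign B (fun i => (cnode k i)^2) (fun i _ => sq_nonneg _)
    rcases Nat.even_or_odd k with hke | hko
    · -- k even, ℓ even
      have hk2 : k % 2 = 0 := Nat.even_iff.mp hke
      rw [filter_mid_even hk2, Finset.prod_singleton,
        cnode_mid hk (show 2*(k/2) = k by omega), map_zero, sub_zero]
      rw [show Q * ((X + C (cnode k j)) * X) = (Q * (X + C (cnode k j))) * X^1 by ring,
        coeff_mul_X_pow']
      rcases Nat.eq_zero_or_pos ℓ with rfl | hl1
      · simp
      · have hl2 : 2 ≤ ℓ := by omega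
        rw [if_pos (by omega : 1 ≤ ℓ), coeff_mul_X_add_C, hQodd (ℓ-1) (by omega),
          if_pos (by omega : 1 ≤ ℓ - 1), mul_zero, add_zero]
        have hsgn := hQsign ((ℓ-2)/2)
        rw [hcardB] at hsgn
        have he : ℓ - 1 - 1 = 2*((ℓ-2)/2) := by omega
        have he2 : (k+1)/2 - 1 - (ℓ-2)/2 = (k-ℓ)/2 := by omega
        rw [he2] at hsgn
        rw [he]
        exact hsgn
    · -- k odd, ℓ odd
      have hk2 : k % 2 = 1 := Nat.odd_iff.mp hko
      rw [filter_mid_odd hk2, Finset.prod_empty, mul_one, coeff_mul_X_add_C,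
        hQodd ℓ (by omega), if_pos (by omega : 1 ≤ ℓ), mul_zero, add_zero]
      have hsgn := hQsign ((ℓ-1)/2)
      rw [hcardB] at hsgn
      have he : ℓ - 1 = 2*((ℓ-1)/2) := by omega
      have he2 : (k+1)/2 - 1 - (ℓ-1)/2 = (k-ℓ)/2 := by omega
      rw [he2] at hsgn
      rw [he]
      exact hsgn
  
lemma denom_sign {k j : ℕ} (hj : j ≤ k) :
    0 < (-1:ℝ)^j * ∏ i ∈ (Finset.range (k+1)).erase j, (cnode k j - cnode k i) := by
  have hsplit : (Finset.range (k+1)).erase j = Finset.range j ∪ Finset.Ico (j+1) (k+1) := by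
    ext i
    simp only [Finset.mem_erase, Finset.mem_range, Finset.mem_union, Finset.mem_Ico]
    omega
  have hdisj : Disjoint (Finset.range j) (Finset.Ico (j+1) (k+1)) := by
    rw [Finset.disjoint_left]
    intro i h1 h2
    simp only [Finset.mem_range] at h1
    simp only [Finset.mem_Ico] at h2
    omega
  rw [hsplit, Finset.prod_union hdisj]
  have h1 : ∏ i ∈ Finset.range j, (cnode k j - cnode k i)
      = (-1:ℝ)^j * ∏ i ∈ Finset.range j, (cnode k i - cnode k j) := by
    rw [show ∀ f : ℕ → ℝ, (∏ i ∈ Finset.range j, f i) = ∏ i ∈ Finset.range j, f i from fun _ => rfl]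
    calc ∏ i ∈ Finset.range j, (cnode k j - cnode k i)
        = ∏ i ∈ Finset.range j, ((-1) * (cnode k i - cnode k j)) := by
          refine Finset.prod_congr rfl fun i _ => by ring
      _ = (-1:ℝ)^j * ∏ i ∈ Finset.range j, (cnode k i - cnode k j) := by
          rw [Finset.prod_mul_distrib, Finset.prod_const, Finset.card_range]
  have hp1 : 0 < ∏ i ∈ Finset.range j, (cnode k i - cnode k j) := by
    refine Finset.prod_pos fun i hi => ?_
    simp only [Finset.mem_range] at hi
    exact sub_pos.mpr (cnode_anti hi hj)
  have hp2 : 0 < ∏ i ∈ Finset.Ico (j+1) (k+1), (cnode k j - cnode k i) := by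
    refine Finset.prod_pos fun i hi => ?_
    simp only [Finset.mem_Ico] at hi
    exact sub_pos.mpr (cnode_anti (by omega) (by omega))
  rw [h1]
  have hsq : ((-1:ℝ)^j) * ((-1:ℝ)^j) = 1 := by
    rw [← pow_add]
    exact Even.neg_one_pow ⟨j, rfl⟩
  nlinarith [mul_pos hp1 hp2]


theorem markov_even (k ℓ : ℕ) (hpar : k % 2 = ℓ % 2) (hl : ℓ ≤ k) (p : ℝ[X])
    (hdeg : p.natDegree ≤ k) {M : ℝ} (hM : ∀ t : ℝ, |t| ≤ 1 → |p.eval t| ≤ M) :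
    |p.coeff ℓ| ≤ |chebC k ℓ| * M := by
  have hM0 : 0 ≤ M := le_trans (abs_nonneg _) (hM 0 (by norm_num))
  set s := Finset.range (k+1) with hs
  have hinj : Set.InjOn (cnode k) ↑s := by
    intro a ha b hb hab
    simp only [hs, Finset.coe_range, Set.mem_Iio] at ha hb
    by_contra hne
    rcases lt_or_gt_of_ne hne with h | h
    · exact absurd hab (cnode_anti h (by omega)).ne'
    · exact absurd hab (cnode_anti h (by omega)).ne
  have hcards : #s = k + 1 := Finset.card_range (k+1)
  have hdegs : p.degree < (#s : ℕ) := by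
    rw [hcards]
    refine lt_of_le_of_lt Polynomial.degree_le_natDegree ?_
    exact_mod_cast Nat.lt_succ_of_le hdeg
  have hbasis : ∀ j, (Lagrange.basis s (cnode k) j).coeff ℓ
      = (∏ i ∈ s.erase j, (cnode k j - cnode k i))⁻¹
        * (∏ i ∈ s.erase j, ((X:ℝ[X]) - C (cnode k i))).coeff ℓ := by
    intro j
    rw [Lagrange.basis]
    simp only [Lagrange.basisDivisor]
    rw [Finset.prod_mul_distrib]
    rw [show (∏ i ∈ s.erase j, C ((cnode k j - cnode k i)⁻¹))
        = C (∏ i ∈ s.erase j, (cnode k j - cnode k i)⁻¹) from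
        (map_prod (Polynomial.C (R := ℝ)) (fun i => (cnode k j - cnode k i)⁻¹)
          (s.erase j)).symm]
    rw [coeff_C_mul, ← Finset.prod_inv_distrib]
  set lam : ℕ → ℝ := fun j => (Lagrange.basis s (cnode k) j).coeff ℓ with hlam
  have hcoeff : p.coeff ℓ = ∑ j ∈ s, p.eval (cnode k j) * lam j := by
    conv_lhs => rw [Lagrange.eq_interpolate hinj hdegs]
    rw [Lagrange.interpolate_apply, Polynomial.finset_sum_coeff]
    exact Finset.sum_congr rfl fun j hj => by rw [coeff_C_mul]
  have hsig : ∀ j ∈ s, 0 ≤ (-1:ℝ)^((k-ℓ)/2 + j) * lam j := by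
    intro j hjs
    have hjk : j ≤ k := by simp only [hs, Finset.mem_range] at hjs; omega
    have hD := denom_sign (k := k) (j := j) hjk
    have hC := coeff_P_sign hpar hl hjk
    set D := ∏ i ∈ s.erase j, (cnode k j - cnode k i) with hD2
    set cP := (∏ i ∈ s.erase j, ((X:ℝ[X]) - C (cnode k i))).coeff ℓ with hcP
    have hDinv : 0 < (-1:ℝ)^j * D⁻¹ := by
      have h2 : (0:ℝ) < ((-1:ℝ)^j * D)⁻¹ := inv_pos.mpr hD
      have h3 : ((-1:ℝ)^j * D)⁻¹ = (-1:ℝ)^j * D⁻¹ := by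
        rw [mul_inv, ← inv_pow, inv_neg, inv_one]
      rwa [h3] at h2
    have hl2 : lam j = D⁻¹ * cP := hbasis j
    have heq : (-1:ℝ)^((k-ℓ)/2 + j) * lam j
        = ((-1:ℝ)^((k-ℓ)/2) * cP) * ((-1:ℝ)^j * D⁻¹) := by
      rw [hl2, pow_add]
      ring
    rw [heq]
    exact mul_nonneg hC (le_of_lt hDinv)
  have habs : ∀ j ∈ s, |lam j| = (-1:ℝ)^((k-ℓ)/2 + j) * lam j := by
    intro j hjs
    rw [← abs_of_nonneg (hsig j hjs), abs_mul, abs_pow, abs_neg, abs_one, one_pow, one_mul]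
  have hT : Polynomial.Chebyshev.T ℝ k
      = Lagrange.interpolate s (cnode k) (fun j => (-1:ℝ)^j) := by
    refine Lagrange.eq_interpolate_of_eval_eq _ hinj ?_ ?_
    · rw [hcards]
      refine lt_of_le_of_lt Polynomial.degree_le_natDegree ?_
      exact_mod_cast Nat.lt_succ_of_le (chebT_natDegree_le k)
    · intro j hjs
      exact T_eval_cnode (by simp only [hs, Finset.mem_range] at hjs; omega)
  have hsum : ∑ j ∈ s, (-1:ℝ)^j * lam j = chebC k ℓ := by
    rw [chebC, hT, Lagrange.interpolate_apply, Polynomial.finset_sum_coeff]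
    exact Finset.sum_congr rfl fun j hj => by rw [coeff_C_mul]
  calc |p.coeff ℓ| = |∑ j ∈ s, p.eval (cnode k j) * lam j| := by rw [hcoeff]
    _ ≤ ∑ j ∈ s, |p.eval (cnode k j) * lam j| := Finset.abs_sum_le_sum_abs _ _
    _ ≤ ∑ j ∈ s, M * |lam j| := by
        refine Finset.sum_le_sum fun j hj => ?_
        rw [abs_mul]
        exact mul_le_mul_of_nonneg_right (hM _ (Real.abs_cos_le_one _)) (abs_nonneg _)
    _ = ∑ j ∈ s, (M * (-1:ℝ)^((k-ℓ)/2)) * ((-1:ℝ)^j * lam j) := by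
        refine Finset.sum_congr rfl fun j hj => ?_
        rw [habs j hj, pow_add]
        ring
    _ = M * ((-1:ℝ)^((k-ℓ)/2) * ∑ j ∈ s, (-1:ℝ)^j * lam j) := by
        rw [← Finset.mul_sum, mul_assoc]
    _ ≤ M * |chebC k ℓ| := by
        rw [hsum]
        refine mul_le_mul_of_nonneg_left ?_ hM0
        calc (-1:ℝ)^((k-ℓ)/2) * chebC k ℓ ≤ |(-1:ℝ)^((k-ℓ)/2) * chebC k ℓ| := le_abs_self _
          _ = |chebC k ℓ| := by rw [abs_mul, abs_pow, abs_neg, abs_one, one_pow, one_mul]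
    _ = |chebC k ℓ| * M := mul_comm _ _

lemma neg_one_pow_mul_eq (a b : ℕ) (h : a % 2 = b % 2) : (-1:ℝ)^a * (-1:ℝ)^b = 1 := by
  rw [← pow_add]
  refine Even.neg_one_pow ?_
  rw [Nat.even_add, Nat.even_iff, Nat.even_iff]
  omega

lemma neg_one_pow_mul_ne (a b : ℕ) (h : a % 2 ≠ b % 2) : (-1:ℝ)^a * (-1:ℝ)^b = -1 := by
  rw [← pow_add]
  refine Odd.neg_one_pow ?_
  rw [Nat.odd_add, Nat.odd_iff, Nat.even_iff]
  omega


theorem markov_coeff (k ℓ : ℕ) (hl : ℓ ≤ k) (p : ℝ[X]) (hdeg : p.natDegree ≤ k)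
    {M : ℝ} (hM : ∀ t : ℝ, |t| ≤ 1 → |p.eval t| ≤ M) :
    |p.coeff ℓ| ≤ |chebCt k ℓ| * M := by
  by_cases hpar : k % 2 = ℓ % 2
  · have hev : Even (k - ℓ) := Nat.even_iff.mpr (by omega)
    rw [chebCt, if_pos hev]
    exact markov_even k ℓ hpar hl p hdeg hM
  · have hod : ¬ Even (k - ℓ) := by rw [Nat.even_iff]; omega
    rw [chebCt, if_neg hod]
    have hkl : ℓ < k := by omega
    set q : ℝ[X] := ∑ m ∈ (Finset.range (k+1)).filter (fun m => m % 2 = ℓ % 2),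
      (C (p.coeff m) * X^m) with hq
    have hq_coeff : q.coeff ℓ = p.coeff ℓ := by
      rw [hq, Polynomial.finset_sum_coeff]
      rw [Finset.sum_eq_single ℓ]
      · rw [coeff_C_mul, coeff_X_pow, if_pos rfl, mul_one]
      · intro m hm hne
        rw [coeff_C_mul, coeff_X_pow, if_neg (Ne.symm hne), mul_zero]
      · intro hℓ
        exfalso
        apply hℓ
        simp only [Finset.mem_filter, Finset.mem_range]
        exact ⟨by omega, trivial⟩
    have hq_deg : q.natDegree ≤ k - 1 := by
      refine Polynomial.natDegree_sum_le_of_forall_le _ _ fun m hm => ?_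
      simp only [Finset.mem_filter, Finset.mem_range] at hm
      refine le_trans (Polynomial.natDegree_C_mul_le _ _) ?_
      rw [Polynomial.natDegree_X_pow]
      omega
    have hp_eval : ∀ t : ℝ, p.eval t = ∑ m ∈ Finset.range (k+1), p.coeff m * t^m :=
      fun t => Polynomial.eval_eq_sum_range' (by omega) t
    have hq_eval : ∀ t : ℝ, q.eval t = (p.eval t + (-1:ℝ)^ℓ * p.eval (-t)) / 2 := by
      intro t
      rw [hq, Polynomial.eval_finset_sum]
      simp only [Polynomial.eval_mul, Polynomial.eval_C, Polynomial.eval_pow,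
        Polynomial.eval_X]
      rw [hp_eval t, hp_eval (-t), Finset.sum_filter, Finset.mul_sum, ← Finset.sum_add_distrib,
        Finset.sum_div]
      refine Finset.sum_congr rfl fun m hm => ?_
      by_cases hpm : m % 2 = ℓ % 2
      · rw [if_pos hpm, neg_pow]
        have h5 := neg_one_pow_mul_eq ℓ m (by omega)
        linear_combination (-(p.coeff m * t^m)/2) * h5
      · rw [if_neg hpm, neg_pow]
        have h5 := neg_one_pow_mul_ne ℓ m (by omega)
        linear_combination (-(p.coeff m * t^m)/2) * h5
    have hq_M : ∀ t : ℝ, |t| ≤ 1 → |q.eval t| ≤ M := by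
      intro t ht
      rw [hq_eval t]
      have h1 := hM t ht
      have h2 := hM (-t) (by rwa [abs_neg])
      have h3 : |(-1:ℝ)^ℓ * p.eval (-t)| = |p.eval (-t)| := by
        rw [abs_mul, abs_pow, abs_neg, abs_one, one_pow, one_mul]
      calc |(p.eval t + (-1:ℝ)^ℓ * p.eval (-t)) / 2|
          ≤ (|p.eval t| + |(-1:ℝ)^ℓ * p.eval (-t)|) / 2 := by
            rw [abs_div, abs_two]
            gcongr
            exact abs_add_le _ _
        _ ≤ M := by rw [h3]; linarith
    have := markov_even (k-1) ℓ (by omega) (by omega) q hq_deg hq_M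
    rwa [hq_coeff] at this




lemma weight_expand {n : ℕ} (ρ : ℝ) (x y : Fin n → Bool) :
    (∏ i : Fin n, ((1 + ρ * (if x i then (1:ℝ) else -1) * (if y i then (1:ℝ) else -1)) / 2))
      = ∑ S ∈ (Finset.univ : Finset (Fin n)).powerset,
          ρ^S.card * walsh n S x * walsh n S y / 2^n := by
  have hstep : ∀ i : Fin n,
      (1 + ρ * (if x i then (1:ℝ) else -1) * (if y i then (1:ℝ) else -1)) / 2
        = (ρ * ((if x i then (1:ℝ) else -1) * (if y i then (1:ℝ) else -1))) * (1/2) + (1/2) := by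
    intro i; ring
  rw [Finset.prod_congr rfl fun i _ => hstep i, Finset.prod_add]
  refine Finset.sum_congr rfl fun S hS => ?_
  have hSc : S.card ≤ n := by
    have := Finset.card_le_card (Finset.mem_powerset.mp hS)
    simpa using this
  simp only [Finset.prod_mul_distrib, Finset.prod_const]
  rw [Finset.card_sdiff_of_subset (by simpa using Finset.mem_powerset.mp hS)]
  simp only [Finset.card_univ, Fintype.card_fin]
  have h2 : ((1:ℝ)/2)^S.card * ((1:ℝ)/2)^(n - S.card) = 1/2^n := by
    rw [← pow_add, (by omega : S.card + (n - S.card) = n), div_pow, one_pow]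
  unfold walsh
  rw [mul_assoc, h2]
  ring

lemma noise_bound {n : ℕ} (f : (Fin n → Bool) → ℝ) (x : Fin n → Bool) {M : ℝ}
    (hMf : ∀ y, |f y| ≤ M) {ρ : ℝ} (hρ : |ρ| ≤ 1) :
    |∑ m ∈ Finset.range (n+1), radProj m f x * ρ^m| ≤ M := by
  set w : (Fin n → Bool) → ℝ := fun y => ∏ i : Fin n,
    ((1 + ρ * (if x i then (1:ℝ) else -1) * (if y i then (1:ℝ) else -1)) / 2) with hw
  have habs := abs_le.mp hρ
  have hw_nonneg : ∀ y, 0 ≤ w y := by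
    intro y
    refine Finset.prod_nonneg fun i _ => ?_
    cases hx : x i <;> cases hy : y i <;> simp [hx, hy] <;> linarith
  have hw_sum : ∑ y : Fin n → Bool, w y = 1 := by
    rw [hw]
    have hps := Finset.prod_univ_sum (fun _ : Fin n => (Finset.univ : Finset Bool))
      (fun i b => (1 + ρ * (if x i then (1:ℝ) else -1) * (if b then (1:ℝ) else -1)) / 2)
    rw [Fintype.piFinset_univ] at hps
    rw [← hps]
    refine Finset.prod_eq_one fun i _ => ?_
    rw [Fintype.sum_bool]
    cases hx : x i <;> simp [hx] <;> ring
  have hkey : ∑ y : Fin n → Bool, w y * f y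
      = ∑ m ∈ Finset.range (n+1), radProj m f x * ρ^m := by
    calc ∑ y : Fin n → Bool, w y * f y
        = ∑ y : Fin n → Bool, ∑ S ∈ (Finset.univ : Finset (Fin n)).powerset,
            (ρ^S.card * walsh n S x * walsh n S y / 2^n) * f y := by
          refine Finset.sum_congr rfl fun y _ => ?_
          rw [show w y = ∑ S ∈ (Finset.univ : Finset (Fin n)).powerset,
            ρ^S.card * walsh n S x * walsh n S y / 2^n from weight_expand ρ x y,
            Finset.sum_mul]
      _ = ∑ S ∈ (Finset.univ : Finset (Fin n)).powerset,
            ρ^S.card * walsh n S x * walshCoeff f S := by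
          rw [Finset.sum_comm]
          refine Finset.sum_congr rfl fun S _ => ?_
          have hterm : ∀ y : Fin n → Bool,
              (ρ^S.card * walsh n S x * walsh n S y / 2^n) * f y
                = (ρ^S.card * walsh n S x / 2^n) * (f y * walsh n S y) := fun y => by ring
          rw [Finset.sum_congr rfl fun y _ => hterm y, ← Finset.mul_sum, walshCoeff]
          ring
      _ = ∑ m ∈ Finset.range (n+1), radProj m f x * ρ^m := by
          rw [Finset.powerset_card_disjiUnion]; erw [Finset.sum_disjiUnion]
          rw [show #(Finset.univ : Finset (Fin n)) = n by simp]
          refine Finset.sum_congr rfl fun m hm => ?_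
          rw [radProj, Finset.sum_mul]
          refine Finset.sum_congr rfl fun S hS => ?_
          rw [(Finset.mem_powersetCard.mp hS).2]
          ring
  calc |∑ m ∈ Finset.range (n+1), radProj m f x * ρ^m|
      = |∑ y : Fin n → Bool, w y * f y| := by rw [hkey]
    _ ≤ ∑ y : Fin n → Bool, |w y * f y| := Finset.abs_sum_le_sum_abs _ _
    _ ≤ ∑ y : Fin n → Bool, w y * M := by
        refine Finset.sum_le_sum fun y _ => ?_
        rw [abs_mul, abs_of_nonneg (hw_nonneg y)]
        exact mul_le_mul_of_nonneg_left (hMf y) (hw_nonneg y)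
    _ = M := by rw [← Finset.sum_mul, hw_sum, one_mul]

theorem stmt_8' (n k ℓ : ℕ) (hlk : ℓ ≤ k) (hkn : k ≤ n)
    (f : (Fin n → Bool) → ℝ) (hf : ∀ S : Finset (Fin n), ¬ S.card ≤ k → walshCoeff f S = 0) :
    Finset.univ.sup' Finset.univ_nonempty (fun x => |radProj ℓ f x|)
      ≤ |chebCt k ℓ| * Finset.univ.sup' Finset.univ_nonempty (fun x => |f x|) := by
  have hMf : ∀ y, |f y| ≤ Finset.univ.sup' Finset.univ_nonempty (fun x => |f x|) :=
    fun y => Finset.le_sup' (fun x => |f x|) (Finset.mem_univ y)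
  set M : ℝ := Finset.univ.sup' Finset.univ_nonempty (fun x => |f x|) with hM
  refine Finset.sup'_le _ _ fun x _ => ?_
  set p : ℝ[X] := ∑ m ∈ Finset.range (k+1), C (radProj m f x) * X^m with hp
  have hp_coeff : p.coeff ℓ = radProj ℓ f x := by
    rw [hp, Polynomial.finset_sum_coeff]
    rw [Finset.sum_eq_single ℓ]
    · rw [coeff_C_mul, coeff_X_pow, if_pos rfl, mul_one]
    · intro m hm hne
      rw [coeff_C_mul, coeff_X_pow, if_neg (Ne.symm hne), mul_zero]
    · intro hℓ
      exact absurd (Finset.mem_range.mpr (by omega)) hℓ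
  have hp_deg : p.natDegree ≤ k := by
    refine Polynomial.natDegree_sum_le_of_forall_le _ _ fun m hm => ?_
    simp only [Finset.mem_range] at hm
    refine le_trans (Polynomial.natDegree_C_mul_le _ _) ?_
    rw [Polynomial.natDegree_X_pow]
    omega
  have hrad0 : ∀ m, k < m → radProj m f x = 0 := by
    intro m hm
    rw [radProj]
    refine Finset.sum_eq_zero fun S hS => ?_
    have hc := (Finset.mem_powersetCard.mp hS).2
    rw [hf S (by omega), zero_mul]
  have hp_eval : ∀ t : ℝ, |t| ≤ 1 → |p.eval t| ≤ M := by
    intro t ht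
    have he : p.eval t = ∑ m ∈ Finset.range (n+1), radProj m f x * t^m := by
      rw [hp, Polynomial.eval_finset_sum]
      simp only [Polynomial.eval_mul, Polynomial.eval_C, Polynomial.eval_pow, Polynomial.eval_X]
      refine Finset.sum_subset (by intro m hm; simp only [Finset.mem_range] at *; omega) ?_
      intro m hm hnm
      simp only [Finset.mem_range] at hm hnm
      rw [hrad0 m (by omega), zero_mul]
    rw [he]
    exact noise_bound f x hMf ht
  rw [← hp_coeff]
  exact markov_coeff k ℓ hlk p hp_deg hp_eval


/-- Figiel's bound. If `n ≥ k ≥ ℓ` and `f` has degree at most `k`, then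
`‖Rad_ℓ f‖_∞ ≤ |c̃(k,ℓ)| ‖f‖_∞`. -/
theorem stmt_8 (n k ℓ : ℕ) (hlk : ℓ ≤ k) (hkn : k ≤ n)
    (f : (Fin n → Bool) → ℝ) (hf : spectrumIn f {j | j ≤ k}) :
    cubeNorm ⊤ (radProj ℓ f) ≤ |chebCt k ℓ| * cubeNorm ⊤ f := by
  have hf' : ∀ S : Finset (Fin n), ¬ S.card ≤ k → walshCoeff f S = 0 := fun S h => hf S h
  have h := stmt_8' n k ℓ hlk hkn f hf'
  simpa [cubeNorm] using h
end
end

section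
/- Let n ≥ k ≥ d ≥ 0. Every function f : {-1,1}^n → ℝ of degree at most k satisfies ‖Rad_{≤d} f‖_∞ ≤ (Σ_{ℓ=0}^d |c̃(k,ℓ)|) · ‖f‖_∞. -/
open Finset
open scoped ENNReal

noncomputable section

namespace Stmt9Aux
open Polynomial

lemma coeff_sum_C_mul_X_pow (N : ℕ) (a : ℕ → ℝ) (i : ℕ) (hi : i < N) :
    (∑ j ∈ Finset.range N, C (a j) * X ^ j).coeff i = a i := by
  rw [Polynomial.finset_sum_coeff]
  rw [Finset.sum_eq_single i]
  · simp
  · intro b _ hb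
    simp [Polynomial.coeff_C_mul, Polynomial.coeff_X_pow, (Ne.symm hb)]
  · intro h; exact absurd (Finset.mem_range.mpr hi) h

lemma natDegree_sum_C_mul_X_pow (N : ℕ) (a : ℕ → ℝ) :
    (∑ j ∈ Finset.range (N + 1), C (a j) * X ^ j).natDegree ≤ N :=
  Polynomial.natDegree_sum_le_of_forall_le _ _ fun j hj =>
    (Polynomial.natDegree_C_mul_X_pow_le _ _).trans
      (Nat.lt_succ_iff.mp (Finset.mem_range.mp hj))

lemma chebyshev_natDegree_le (m : ℕ) : (Polynomial.Chebyshev.T ℝ m).natDegree ≤ m := by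
  induction m using Nat.strong_induction_on with
  | _ m ih =>
    match m with
    | 0 => simp [Polynomial.Chebyshev.T_zero]
    | 1 => simp [Polynomial.Chebyshev.T_one]
    | (m + 2) =>
      have hc : ((m + 2 : ℕ) : ℤ) = (m : ℤ) + 2 := by push_cast; ring
      rw [hc, Polynomial.Chebyshev.T_add_two]
      refine le_trans (Polynomial.natDegree_sub_le _ _) (max_le ?_ ?_)
      · refine le_trans (Polynomial.natDegree_mul_le) ?_
        have h1 : ((m : ℤ) + 1) = ((m + 1 : ℕ) : ℤ) := by push_cast; ring
        rw [h1]
        have := ih (m + 1) (by omega)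
        have h2 : (2 * X : ℝ[X]).natDegree ≤ 1 := by
          refine le_trans Polynomial.natDegree_mul_le ?_
          simp [Polynomial.natDegree_X]
        omega
      · have := ih m (by omega); omega

lemma aux_parity (m : ℕ) (p : ℝ[X]) (hdeg : p.natDegree < m + 2) (t : ℝ) :
    t ^ (m % 2) *
      (∑ j ∈ Finset.range (m / 2 + 1), C (p.coeff (2 * j + m % 2)) * X ^ j).eval (t ^ 2)
    = (p.eval t + (-1) ^ (m % 2) * p.eval (-t)) / 2 := by
  have hev : ∀ u : ℝ, p.eval u = ∑ r ∈ Finset.range (m + 2), p.coeff r * u ^ r := fun u =>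
    Polynomial.eval_eq_sum_range' hdeg u
  rw [hev, hev, Polynomial.eval_finset_sum]
  simp only [Polynomial.eval_mul, Polynomial.eval_C, Polynomial.eval_pow, Polynomial.eval_X]
  rw [Finset.mul_sum, Finset.mul_sum, ← Finset.sum_add_distrib, Finset.sum_div]
  have key : ∀ r : ℕ, (p.coeff r * t ^ r + (-1) ^ (m % 2) * (p.coeff r * (-t) ^ r)) / 2
      = if r % 2 = m % 2 then p.coeff r * t ^ r else 0 := by
    intro r
    have hpow : ∀ s : ℕ, ((-1 : ℝ)) ^ s = (-1) ^ (s % 2) := by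
      intro s
      conv_lhs => rw [← Nat.div_add_mod s 2]
      rw [pow_add, pow_mul]
      norm_num
    have hnt : (-t) ^ r = (-1) ^ r * t ^ r := neg_pow t r
    rw [hnt, hpow r]
    rcases Nat.mod_two_eq_zero_or_one r with h1 | h1 <;>
      rcases Nat.mod_two_eq_zero_or_one m with h2 | h2 <;>
        rw [h1, h2] <;> simp <;> ring
  rw [Finset.sum_congr rfl fun r _ => key r, ← Finset.sum_filter]
  refine Finset.sum_nbij' (fun j => 2 * j + m % 2) (fun r => r / 2) ?_ ?_ ?_ ?_ ?_
  · intro j hj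
    simp only [Finset.mem_filter, Finset.mem_range] at *
    omega
  · intro r hr
    simp only [Finset.mem_filter, Finset.mem_range] at *
    omega
  · intro j hj
    show (2 * j + m % 2) / 2 = j
    omega
  · intro r hr
    simp only [Finset.mem_filter, Finset.mem_range] at hr
    show 2 * (r / 2) + m % 2 = r
    omega
  · intro j hj
    show t ^ (m % 2) * (p.coeff (2 * j + m % 2) * (t ^ 2) ^ j)
      = p.coeff (2 * j + m % 2) * t ^ (2 * j + m % 2)
    rw [← pow_mul, pow_add]
    ring


lemma markov_parity (m l : ℕ) (hl : l ≤ m) (hpar : l % 2 = m % 2) {M : ℝ} (hM : 0 ≤ M)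
    (p : ℝ[X]) (hdeg : p.natDegree < m + 2)
    (hb : ∀ t : ℝ, |t| ≤ 1 → |p.eval t| ≤ M) :
    |p.coeff l| ≤ |(Polynomial.Chebyshev.T ℝ m).coeff l| * M := by
  -- trivial case m = 0
  rcases Nat.eq_zero_or_pos m with rfl | hm
  · interval_cases l
    have h0 : (Polynomial.Chebyshev.T ℝ (0 : ℕ)).coeff 0 = 1 := by
      norm_num [Polynomial.Chebyshev.T_zero]
    rw [h0, Polynomial.coeff_zero_eq_eval_zero]
    simpa using hb 0 (by norm_num)
  have hmR : (0 : ℝ) < m := by exact_mod_cast hm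
  set μ := m / 2 with hμ
  set lam := l / 2 with hlam
  have hmod : m % 2 < 2 := Nat.mod_lt _ two_pos
  have hm_eq : 2 * μ + m % 2 = m := by rw [hμ]; omega
  have hl_eq : 2 * lam + m % 2 = l := by rw [hlam]; omega
  have hlamμ : lam ≤ μ := by omega
  -- nodes
  set c : ℕ → ℝ := fun j => Real.cos (j * Real.pi / m) with hc
  set v : ℕ → ℝ := fun j => Real.cos (j * Real.pi / m) ^ 2 with hv
  have hpi := Real.pi_pos
  have hθle : ∀ j : ℕ, j ≤ μ → (j : ℝ) * Real.pi / m ≤ Real.pi / 2 := by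
    intro j hj
    rw [div_le_iff₀ hmR]
    have h2j : (2 * j : ℝ) ≤ (m : ℝ) := by exact_mod_cast (by omega : 2 * j ≤ m)
    nlinarith
  have hθ0 : ∀ j : ℕ, 0 ≤ (j : ℝ) * Real.pi / m :=
    fun j => div_nonneg (mul_nonneg (Nat.cast_nonneg j) hpi.le) hmR.le
  have hcnn : ∀ j : ℕ, j ≤ μ → 0 ≤ c j := by
    intro j hj
    exact Real.cos_nonneg_of_mem_Icc ⟨by linarith [hθ0 j], hθle j hj⟩
  have hcpos : m % 2 = 1 → ∀ j : ℕ, j ≤ μ → 0 < c j := by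
    intro hodd j hj
    apply Real.cos_pos_of_mem_Ioo
    constructor
    · have := hθ0 j; linarith
    · rw [div_lt_iff₀ hmR]
      have h2j : (2 * j : ℝ) < (m : ℝ) := by exact_mod_cast (by omega : 2 * j < m)
      nlinarith
  have hvanti : ∀ i j : ℕ, i < j → j ≤ μ → v j < v i := by
    intro i j hij hj
    have hijR : (i : ℝ) < (j : ℝ) := by exact_mod_cast hij
    have h1 : (i : ℝ) * Real.pi / m < (j : ℝ) * Real.pi / m := by gcongr
    have h2 : c j < c i :=
      Real.cos_lt_cos_of_nonneg_of_le_pi (hθ0 i) (le_trans (hθle j hj) (by linarith)) h1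
    exact pow_lt_pow_left₀ h2 (hcnn j hj) two_ne_zero
  have hvnn : ∀ j : ℕ, 0 ≤ v j := fun j => sq_nonneg _
  have hinj : Set.InjOn v ↑(Finset.range (μ + 1)) := by
    intro i hi j hj hij
    simp only [Finset.coe_range, Set.mem_Iio] at hi hj
    by_contra hne
    rcases Nat.lt_or_ge i j with h | h
    · exact absurd hij (ne_of_gt (hvanti i j h (by omega)))
    · exact absurd hij (ne_of_lt (hvanti j i (by omega) (by omega)))
  -- cos (m * θ j) = (-1)^j  and T values
  have hcosm : ∀ j : ℕ, Real.cos ((m : ℝ) * ((j : ℝ) * Real.pi / m)) = (-1) ^ j := by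
    intro j
    have : (m : ℝ) * ((j : ℝ) * Real.pi / m) = (j : ℝ) * Real.pi := by
      field_simp
    rw [this]
    have := Real.cos_nat_mul_pi_sub 0 j
    simpa using this
  have hTval : ∀ j : ℕ, (Polynomial.Chebyshev.T ℝ m).eval (c j) = (-1) ^ j := by
    intro j
    rw [hc]
    simp only []
    rw [Polynomial.Chebyshev.T_real_cos]
    push_cast
    exact hcosm j
  have hTvalneg : ∀ j : ℕ, (Polynomial.Chebyshev.T ℝ m).eval (-(c j)) = (-1) ^ m * (-1) ^ j := by
    intro j
    have hneg : -(c j) = Real.cos (Real.pi - (j : ℝ) * Real.pi / m) := by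
      rw [Real.cos_pi_sub]
    rw [hneg, Polynomial.Chebyshev.T_real_cos]
    push_cast
    have : (m : ℝ) * (Real.pi - (j : ℝ) * Real.pi / m)
        = (m : ℝ) * Real.pi - (m : ℝ) * ((j : ℝ) * Real.pi / m) := by ring
    rw [this]
    rw [Real.cos_nat_mul_pi_sub, hcosm j]
  -- the even/odd compressed polynomials
  set h : ℝ[X] := ∑ j ∈ Finset.range (μ + 1), C (p.coeff (2 * j + m % 2)) * X ^ j with hh
  set H : ℝ[X] := ∑ j ∈ Finset.range (μ + 1),
    C ((Polynomial.Chebyshev.T ℝ m).coeff (2 * j + m % 2)) * X ^ j with hH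
  have hdegT : (Polynomial.Chebyshev.T ℝ m).natDegree < m + 2 :=
    lt_of_le_of_lt (chebyshev_natDegree_le m) (by omega)
  have hhcoeff : h.coeff lam = p.coeff l := by
    rw [hh, coeff_sum_C_mul_X_pow _ _ _ (by omega), hl_eq]
  have hHcoeff : H.coeff lam = (Polynomial.Chebyshev.T ℝ m).coeff l := by
    rw [hH, coeff_sum_C_mul_X_pow _ _ _ (by omega), hl_eq]
  have hdlt : ∀ q : ℝ[X], q.natDegree ≤ μ → q.degree < (#(Finset.range (μ + 1)) : WithBot ℕ) := by
    intro q hq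
    rw [Finset.card_range]
    exact lt_of_le_of_lt q.degree_le_natDegree (by exact_mod_cast Nat.lt_succ_of_le hq)
  have hhd : h.degree < (#(Finset.range (μ + 1)) : WithBot ℕ) :=
    hdlt h (natDegree_sum_C_mul_X_pow μ _)
  have hHd : H.degree < (#(Finset.range (μ + 1)) : WithBot ℕ) :=
    hdlt H (natDegree_sum_C_mul_X_pow μ _)
  -- eval identities
  have hheval : ∀ j : ℕ, j ≤ μ → |c j ^ (m % 2) * h.eval (v j)| ≤ M := by
    intro j hj
    have hA := aux_parity m p hdeg (c j)
    have hvj : v j = c j ^ 2 := rfl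
    rw [hvj, hh, hA]
    rw [abs_div]
    have hc1 : |c j| ≤ 1 := Real.abs_cos_le_one _
    have h1 := hb (c j) hc1
    have h2 := hb (-(c j)) (by rwa [abs_neg])
    have h3 : |(-1 : ℝ) ^ (m % 2) * p.eval (-(c j))| ≤ M := by
      rw [abs_mul, abs_pow, abs_neg, abs_one, one_pow, one_mul]; exact h2
    calc |p.eval (c j) + (-1) ^ (m % 2) * p.eval (-(c j))| / |2|
        ≤ (M + M) / |2| := by
          gcongr
          exact (abs_add_le _ _).trans (add_le_add h1 h3)
      _ = M := by rw [abs_two]; ring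
  have hHeval : ∀ j : ℕ, j ≤ μ → c j ^ (m % 2) * H.eval (v j) = (-1) ^ j := by
    intro j hj
    have hA := aux_parity m (Polynomial.Chebyshev.T ℝ m) hdegT (c j)
    have hvj : v j = c j ^ 2 := rfl
    rw [hvj, hH, hA, hTval j, hTvalneg j]
    have hsgn : (-1 : ℝ) ^ (m % 2) * (-1) ^ m = 1 := by
      have hmm : (-1 : ℝ) ^ m = (-1) ^ (m % 2) := by
        conv_lhs => rw [← Nat.div_add_mod m 2]
        rw [pow_add, pow_mul]; norm_num
      rw [hmm]
      rcases Nat.mod_two_eq_zero_or_one m with h2 | h2 <;> rw [h2] <;> norm_num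
    calc ((-1 : ℝ) ^ j + (-1) ^ (m % 2) * ((-1) ^ m * (-1) ^ j)) / 2
        = ((-1) ^ j * (1 + (-1) ^ (m % 2) * (-1) ^ m)) / 2 := by ring
      _ = (-1) ^ j := by rw [hsgn]; ring
  -- Lagrange interpolation
  have hhinterp := Lagrange.eq_interpolate (v := v) hinj hhd
  have hHinterp := Lagrange.eq_interpolate (v := v) hinj hHd
  set cc : ℕ → ℝ := fun j => (Lagrange.basis (Finset.range (μ + 1)) v j).coeff lam with hcc
  have hcoeffh : h.coeff lam = ∑ j ∈ Finset.range (μ + 1), h.eval (v j) * cc j := by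
    conv_lhs => rw [hhinterp]
    rw [Lagrange.interpolate_apply, Polynomial.finset_sum_coeff]
    exact Finset.sum_congr rfl fun j _ => by rw [Polynomial.coeff_C_mul]
  have hcoeffH : H.coeff lam = ∑ j ∈ Finset.range (μ + 1), H.eval (v j) * cc j := by
    conv_lhs => rw [hHinterp]
    rw [Lagrange.interpolate_apply, Polynomial.finset_sum_coeff]
    exact Finset.sum_congr rfl fun j _ => by rw [Polynomial.coeff_C_mul]
  set D : ℕ → ℝ := fun j => ∏ i ∈ (Finset.range (μ + 1)).erase j, (v j - v i)⁻¹ with hD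
  set Ncf : ℕ → ℝ :=
    fun j => (∏ i ∈ (Finset.range (μ + 1)).erase j, (X - C (v i))).coeff lam with hNcf
  have hccD : ∀ j : ℕ, cc j = D j * Ncf j := by
    intro j
    rw [hcc]
    simp only [Lagrange.basis, Lagrange.basisDivisor]
    rw [Finset.prod_mul_distrib, ← map_prod, Polynomial.coeff_C_mul]
  have hDsign : ∀ j : ℕ, j ≤ μ → 0 < (-1 : ℝ) ^ j * D j := by
    intro j hj
    have hsplit : (Finset.range (μ + 1)).erase j
        = Finset.range j ∪ Finset.Ico (j + 1) (μ + 1) := by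
      ext i
      simp only [Finset.mem_erase, Finset.mem_range, Finset.mem_union, Finset.mem_Ico]
      omega
    have hdisj : Disjoint (Finset.range j) (Finset.Ico (j + 1) (μ + 1)) := by
      rw [Finset.disjoint_left]
      intro a ha hb2
      simp only [Finset.mem_range, Finset.mem_Ico] at ha hb2
      omega
    rw [hD]
    simp only []
    rw [hsplit, Finset.prod_union hdisj]
    have hpow : (-1 : ℝ) ^ j = ∏ _i ∈ Finset.range j, (-1 : ℝ) := by
      rw [Finset.prod_const, Finset.card_range]
    rw [hpow, ← mul_assoc, ← Finset.prod_mul_distrib]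
    refine mul_pos (Finset.prod_pos ?_) (Finset.prod_pos ?_)
    · intro i hi
      have hij : i < j := Finset.mem_range.mp hi
      have := hvanti i j hij hj
      have hneg : v j - v i < 0 := by linarith
      have : (v j - v i)⁻¹ < 0 := inv_lt_zero.mpr hneg
      nlinarith
    · intro i hi
      have hij := Finset.mem_Ico.mp hi
      have := hvanti j i (by omega) (by omega)
      exact inv_pos.mpr (by linarith)
  have hNsign : ∀ j : ℕ, j ∈ Finset.range (μ + 1) → 0 ≤ (-1 : ℝ) ^ (μ - lam) * Ncf j := by
    intro j hj
    have hcarde : ((Finset.range (μ + 1)).erase j).card = μ := by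
      rw [Finset.card_erase_of_mem hj, Finset.card_range]
      omega
    have hcard : Multiset.card (Multiset.map v ((Finset.range (μ + 1)).erase j).val) = μ := by
      rw [Multiset.card_map]
      exact hcarde
    have hprod : ∏ i ∈ (Finset.range (μ + 1)).erase j, (X - C (v i))
        = (Multiset.map (fun t => X - C t)
            (Multiset.map v ((Finset.range (μ + 1)).erase j).val)).prod := by
      rw [Multiset.map_map]
      exact Finset.prod_eq_multiset_prod _ _
    rw [hNcf]
    simp only []
    rw [hprod, Multiset.prod_X_sub_C_coeff _ (by rw [hcard]; exact hlamμ), hcard,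
      ← mul_assoc, ← mul_pow]
    have hone : ((-1 : ℝ) * (-1)) ^ (μ - lam) = 1 := by norm_num
    rw [hone, one_mul]
    -- 0 ≤ esymm
    have : 0 ≤ (Multiset.map v ((Finset.range (μ + 1)).erase j).val).esymm (μ - lam) := by
      rw [Multiset.esymm]
      apply Multiset.sum_nonneg
      intro x hx
      obtain ⟨t, ht, rfl⟩ := Multiset.mem_map.mp hx
      apply Multiset.prod_nonneg
      intro a ha
      have hts := (Multiset.mem_powersetCard.mp ht).1
      have has := Multiset.mem_of_le hts ha
      obtain ⟨i, _, rfl⟩ := Multiset.mem_map.mp has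
      exact hvnn i
    exact this
  -- pointwise bounds
  have hhb : ∀ j : ℕ, j ≤ μ → |h.eval (v j)| ≤ M * (H.eval (v j) * (-1) ^ j) := by
    intro j hj
    have hc_nn : 0 ≤ c j ^ (m % 2) := pow_nonneg (hcnn j hj) _
    have h1 : c j ^ (m % 2) * (H.eval (v j) * (-1) ^ j) = 1 := by
      rw [← mul_assoc, hHeval j hj, ← pow_add]
      exact Even.neg_one_pow ⟨j, rfl⟩
    have hBpos : 0 < H.eval (v j) * (-1) ^ j := by nlinarith [h1, hc_nn]
    have e1 : |c j ^ (m % 2) * h.eval (v j)| = c j ^ (m % 2) * |h.eval (v j)| := by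
      rw [abs_mul, abs_of_nonneg hc_nn]
    have e2 := mul_le_mul_of_nonneg_right (hheval j hj) hBpos.le
    rw [e1] at e2
    calc |h.eval (v j)|
        = c j ^ (m % 2) * |h.eval (v j)| * (H.eval (v j) * (-1) ^ j) := by
          linear_combination (-(|h.eval (v j)|)) * h1
      _ ≤ M * (H.eval (v j) * (-1) ^ j) := e2
  have habs : ∀ j ∈ Finset.range (μ + 1), |cc j| = (-1 : ℝ) ^ (μ - lam) * ((-1) ^ j * cc j) := by
    intro j hj
    have hj' : j ≤ μ := by have := Finset.mem_range.mp hj; omega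
    have hnn : 0 ≤ (-1 : ℝ) ^ (μ - lam) * ((-1) ^ j * cc j) := by
      calc (0 : ℝ) ≤ ((-1) ^ j * D j) * ((-1) ^ (μ - lam) * Ncf j) :=
            mul_nonneg (hDsign j hj').le (hNsign j hj)
        _ = (-1) ^ (μ - lam) * ((-1) ^ j * cc j) := by rw [hccD j]; ring
    rw [← abs_of_nonneg hnn, abs_mul, abs_mul, abs_pow, abs_pow, abs_neg, abs_one,
      one_pow, one_pow, one_mul, one_mul]
  -- final chain
  calc |p.coeff l| = |h.coeff lam| := by rw [hhcoeff]
    _ = |∑ j ∈ Finset.range (μ + 1), h.eval (v j) * cc j| := by rw [hcoeffh]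
    _ ≤ ∑ j ∈ Finset.range (μ + 1), |h.eval (v j) * cc j| := Finset.abs_sum_le_sum_abs _ _
    _ ≤ ∑ j ∈ Finset.range (μ + 1), M * (H.eval (v j) * (-1) ^ j) * |cc j| := by
        apply Finset.sum_le_sum
        intro j hj
        rw [abs_mul]
        exact mul_le_mul_of_nonneg_right (hhb j (by have := Finset.mem_range.mp hj; omega))
          (abs_nonneg _)
    _ = M * ((-1) ^ (μ - lam) * ∑ j ∈ Finset.range (μ + 1), H.eval (v j) * cc j) := by
        rw [Finset.mul_sum, Finset.mul_sum]
        apply Finset.sum_congr rfl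
        intro j hj
        rw [habs j hj]
        have hsq : ((-1 : ℝ) ^ j) ^ 2 = 1 := by
          rw [← pow_mul, mul_comm, pow_mul]
          norm_num
        linear_combination (M * H.eval (v j) * cc j * (-1 : ℝ) ^ (μ - lam)) * hsq
    _ = M * ((-1) ^ (μ - lam) * H.coeff lam) := by rw [← hcoeffH]
    _ ≤ M * |H.coeff lam| := by
        apply mul_le_mul_of_nonneg_left ?_ hM
        calc (-1 : ℝ) ^ (μ - lam) * H.coeff lam ≤ |(-1) ^ (μ - lam) * H.coeff lam| :=
              le_abs_self _
          _ = |H.coeff lam| := by rw [abs_mul, abs_pow, abs_neg, abs_one, one_pow, one_mul]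
    _ = |(Polynomial.Chebyshev.T ℝ m).coeff l| * M := by rw [hHcoeff, mul_comm]


lemma markov_coeff (k l : ℕ) (hl : l ≤ k) {M : ℝ} (hM : 0 ≤ M)
    (p : ℝ[X]) (hdeg : p.natDegree ≤ k)
    (hb : ∀ t : ℝ, |t| ≤ 1 → |p.eval t| ≤ M) :
    |p.coeff l| ≤ |chebCt k l| * M := by
  unfold chebCt chebC
  by_cases hpar : Even (k - l)
  · rw [if_pos hpar]
    rw [Nat.even_sub hl, Nat.even_iff, Nat.even_iff] at hpar
    exact markov_parity k l hl (by omega) hM p (by omega) hb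
  · rw [if_neg hpar]
    rw [Nat.even_sub hl, Nat.even_iff, Nat.even_iff] at hpar
    have hlk : l < k := by
      rcases Nat.eq_or_lt_of_le hl with rfl | h
      · exact absurd (Iff.rfl) hpar
      · exact h
    exact markov_parity (k - 1) l (by omega) (by omega) hM p (by omega) hb

-- the transform identity on the cube
lemma cube_identity (n k : ℕ) (f : (Fin n → Bool) → ℝ) (hkn : k ≤ n)
    (hf : spectrumIn f {j | j ≤ k}) (x : Fin n → Bool) (δ : ℝ) :
    ∑ ℓ ∈ Finset.range (k + 1), radProj ℓ f x * δ ^ ℓ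
      = (∑ y : Fin n → Bool, f y * ∏ i : Fin n,
          (δ * ((if x i then (1 : ℝ) else -1) * (if y i then (1 : ℝ) else -1)) + 1)) / 2 ^ n := by
  have hA : ∀ y : Fin n → Bool,
      ∏ i : Fin n, (δ * ((if x i then (1 : ℝ) else -1) * (if y i then (1 : ℝ) else -1)) + 1)
      = ∑ S ∈ (Finset.univ : Finset (Fin n)).powerset,
          δ ^ S.card * (walsh n S x * walsh n S y) := by
    intro y
    rw [Finset.prod_add]
    apply Finset.sum_congr rfl
    intro S _
    rw [Finset.prod_const_one, mul_one, Finset.prod_mul_distrib, Finset.prod_const,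
      Finset.prod_mul_distrib]
    rfl
  -- expand the right side
  have hB : (∑ y : Fin n → Bool, f y * ∏ i : Fin n,
        (δ * ((if x i then (1 : ℝ) else -1) * (if y i then (1 : ℝ) else -1)) + 1)) / 2 ^ n
      = ∑ S ∈ (Finset.univ : Finset (Fin n)).powerset,
          walshCoeff f S * walsh n S x * δ ^ S.card := by
    rw [Finset.sum_congr rfl fun y _ => by rw [hA y]]
    rw [Finset.sum_congr rfl fun y _ => Finset.mul_sum _ _ _]
    rw [Finset.sum_comm, Finset.sum_div]
    apply Finset.sum_congr rfl
    intro S _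
    rw [walshCoeff, div_mul_eq_mul_div, div_mul_eq_mul_div]
    congr 1
    rw [Finset.sum_mul, Finset.sum_mul]
    exact Finset.sum_congr rfl fun y _ => by ring
  rw [hB, Finset.powerset_card_biUnion,
    Finset.sum_biUnion ((Finset.pairwise_disjoint_powersetCard _).set_pairwise _)]
  have hC : ∀ ℓ : ℕ, (∑ S ∈ Finset.powersetCard ℓ (Finset.univ : Finset (Fin n)),
      walshCoeff f S * walsh n S x * δ ^ S.card) = radProj ℓ f x * δ ^ ℓ := by
    intro ℓ
    rw [radProj, Finset.sum_mul]
    apply Finset.sum_congr rfl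
    intro S hS
    rw [Finset.mem_powersetCard_univ.mp hS]
  rw [Finset.sum_congr rfl fun ℓ _ => hC ℓ]
  rw [show #(Finset.univ : Finset (Fin n)) = n by simp]
  refine Finset.sum_subset (Finset.range_subset_range.mpr (by omega)) ?_
  intro ℓ hℓ1 hℓ2
  have hcard : k < ℓ := by
    simp only [Finset.mem_range] at hℓ1 hℓ2
    omega
  have hz : radProj ℓ f x = 0 := by
    rw [radProj]
    apply Finset.sum_eq_zero
    intro S hS
    rw [hf S (by
      rw [Finset.mem_powersetCard_univ.mp hS]
      simp only [Set.mem_setOf_eq]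
      omega), zero_mul]
  rw [hz, zero_mul]

lemma cube_factor_nonneg (δ : ℝ) (hδ : |δ| ≤ 1) (a b : Bool) :
    0 ≤ δ * ((if a then (1 : ℝ) else -1) * (if b then (1 : ℝ) else -1)) + 1 := by
  have := abs_le.mp hδ
  cases a <;> cases b <;> simp <;> linarith

lemma cube_sum_prod (n : ℕ) (x : Fin n → Bool) (δ : ℝ) :
    ∑ y : Fin n → Bool, ∏ i : Fin n,
        (δ * ((if x i then (1 : ℝ) else -1) * (if y i then (1 : ℝ) else -1)) + 1)
      = 2 ^ n := by
  have h1 : ∑ y : Fin n → Bool, ∏ i : Fin n,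
        (δ * ((if x i then (1 : ℝ) else -1) * (if y i then (1 : ℝ) else -1)) + 1)
      = ∑ y ∈ Fintype.piFinset (fun _ : Fin n => (Finset.univ : Finset Bool)),
          ∏ i : Fin n,
            (δ * ((if x i then (1 : ℝ) else -1) * (if y i then (1 : ℝ) else -1)) + 1) := by
    rw [Fintype.piFinset_univ]
  have h3 := Finset.prod_univ_sum (fun _ : Fin n => (Finset.univ : Finset Bool))
    (fun i b => δ * ((if x i then (1 : ℝ) else -1) * (if b then 1 else -1)) + 1)
  rw [h1, ← h3]
  have h2 : ∀ i : Fin n, (∑ b : Bool,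
      (δ * ((if x i then (1 : ℝ) else -1) * (if b then (1 : ℝ) else -1)) + 1)) = 2 := by
    intro i
    rw [Fintype.sum_bool]
    cases x i <;> simp <;> ring
  rw [Finset.prod_congr rfl fun i _ => h2 i, Finset.prod_const]
  simp


end Stmt9Aux

/-- if `n ≥ k ≥ d` and `f` has degree at most `k`, then
`‖Rad_{≤d} f‖_∞ ≤ (Σ_{ℓ=0}^d |c̃(k,ℓ)|) ‖f‖_∞`. -/
theorem stmt_9 (n k d : ℕ) (hdk : d ≤ k) (hkn : k ≤ n)
    (f : (Fin n → Bool) → ℝ) (hf : spectrumIn f {j | j ≤ k}) :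
    cubeNorm ⊤ (fun x => ∑ ℓ ∈ Finset.range (d + 1), radProj ℓ f x) ≤
      (∑ ℓ ∈ Finset.range (d + 1), |chebCt k ℓ|) * cubeNorm ⊤ f := by
  have hMdef : cubeNorm ⊤ f = Finset.univ.sup' Finset.univ_nonempty (fun x => |f x|) := by
    unfold cubeNorm
    rw [if_pos rfl]
  set M := cubeNorm ⊤ f with hMset
  have hMb : ∀ y, |f y| ≤ M := by
    intro y
    rw [hMdef]
    exact Finset.le_sup' (fun x => |f x|) (Finset.mem_univ y)
  have hM0 : 0 ≤ M := le_trans (abs_nonneg _) (hMb (fun _ => true))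
  have hbound : ∀ x : Fin n → Bool, ∀ δ : ℝ, |δ| ≤ 1 →
      |∑ ℓ ∈ Finset.range (k + 1), radProj ℓ f x * δ ^ ℓ| ≤ M := by
    intro x δ hδ
    rw [Stmt9Aux.cube_identity n k f hkn hf x δ]
    have h2n : (0 : ℝ) < 2 ^ n := by positivity
    rw [abs_div, abs_of_pos h2n, div_le_iff₀ h2n]
    have hprodnn : ∀ y : Fin n → Bool, 0 ≤ ∏ i : Fin n,
        (δ * ((if x i then (1 : ℝ) else -1) * (if y i then (1 : ℝ) else -1)) + 1) :=
      fun y => Finset.prod_nonneg fun i _ => Stmt9Aux.cube_factor_nonneg δ hδ (x i) (y i)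
    calc |∑ y : Fin n → Bool, f y * ∏ i : Fin n,
            (δ * ((if x i then (1 : ℝ) else -1) * (if y i then (1 : ℝ) else -1)) + 1)|
        ≤ ∑ y : Fin n → Bool, |f y * ∏ i : Fin n,
            (δ * ((if x i then (1 : ℝ) else -1) * (if y i then (1 : ℝ) else -1)) + 1)| :=
          Finset.abs_sum_le_sum_abs _ _
      _ = ∑ y : Fin n → Bool, |f y| * ∏ i : Fin n,
            (δ * ((if x i then (1 : ℝ) else -1) * (if y i then (1 : ℝ) else -1)) + 1) :=
          Finset.sum_congr rfl fun y _ => by rw [abs_mul, abs_of_nonneg (hprodnn y)]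
      _ ≤ ∑ y : Fin n → Bool, M * ∏ i : Fin n,
            (δ * ((if x i then (1 : ℝ) else -1) * (if y i then (1 : ℝ) else -1)) + 1) :=
          Finset.sum_le_sum fun y _ => mul_le_mul_of_nonneg_right (hMb y) (hprodnn y)
      _ = M * ∑ y : Fin n → Bool, ∏ i : Fin n,
            (δ * ((if x i then (1 : ℝ) else -1) * (if y i then (1 : ℝ) else -1)) + 1) :=
          (Finset.mul_sum _ _ _).symm
      _ = M * 2 ^ n := by rw [Stmt9Aux.cube_sum_prod n x δ]
  have hrad : ∀ x : Fin n → Bool, ∀ ℓ : ℕ, ℓ ≤ k → |radProj ℓ f x| ≤ |chebCt k ℓ| * M := by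
    intro x ℓ hℓ
    set P : Polynomial ℝ := ∑ j ∈ Finset.range (k + 1), Polynomial.C (radProj j f x) * Polynomial.X ^ j with hP
    have hPc : P.coeff ℓ = radProj ℓ f x := Stmt9Aux.coeff_sum_C_mul_X_pow _ _ _ (by omega)
    rw [← hPc]
    apply Stmt9Aux.markov_coeff k ℓ hℓ hM0 P (Stmt9Aux.natDegree_sum_C_mul_X_pow k _)
    intro t ht
    have he : P.eval t = ∑ j ∈ Finset.range (k + 1), radProj j f x * t ^ j := by
      rw [hP, Polynomial.eval_finset_sum]
      exact Finset.sum_congr rfl fun j _ => by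
        rw [Polynomial.eval_mul, Polynomial.eval_C, Polynomial.eval_pow, Polynomial.eval_X]
    rw [he]
    exact hbound x t ht
  have hL : cubeNorm ⊤ (fun x => ∑ ℓ ∈ Finset.range (d + 1), radProj ℓ f x)
      = Finset.univ.sup' Finset.univ_nonempty
          (fun x => |∑ ℓ ∈ Finset.range (d + 1), radProj ℓ f x|) := by
    unfold cubeNorm
    rw [if_pos rfl]
  rw [hL]
  apply Finset.sup'_le
  intro x _
  calc |∑ ℓ ∈ Finset.range (d + 1), radProj ℓ f x|
      ≤ ∑ ℓ ∈ Finset.range (d + 1), |radProj ℓ f x| := Finset.abs_sum_le_sum_abs _ _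
    _ ≤ ∑ ℓ ∈ Finset.range (d + 1), |chebCt k ℓ| * M :=
        Finset.sum_le_sum fun ℓ hℓ => hrad x ℓ (by have := Finset.mem_range.mp hℓ; omega)
    _ = (∑ ℓ ∈ Finset.range (d + 1), |chebCt k ℓ|) * M := (Finset.sum_mul _ _ _).symm
end
end

section
/- For every k ≥ ℓ ≥ 0, the modified Chebyshev coefficients satisfy |c̃(k,ℓ)| ≤ k^ℓ / ℓ!. -/
open Finset
open scoped ENNReal

noncomputable section

lemma auxA (m k : ℕ) : k * (k+1)^m ≤ k^(m+1) + m * (k+1)^m := by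
  induction m with
  | zero => simp
  | succ m ih =>
    have h1 : k * (k+1)^(m+1) = (k+1) * (k * (k+1)^m) := by ring
    have h2 : (k+1) * (k * (k+1)^m) ≤ (k+1) * (k^(m+1) + m * (k+1)^m) :=
      Nat.mul_le_mul_left _ ih
    have h3 : k^(m+1) ≤ (k+1)^(m+1) := Nat.pow_le_pow_left (by omega) _
    calc k * (k+1)^(m+1) ≤ (k+1) * (k^(m+1) + m * (k+1)^m) := by rw [h1]; exact h2
      _ = k^(m+2) + k^(m+1) + m * (k+1)^(m+1) := by ring
      _ ≤ k^(m+2) + (m+1) * (k+1)^(m+1) := by nlinarith [h3]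

lemma auxB (m k : ℕ) : 2*(m+1)*(k+1)^m + k^(m+1) ≤ (k+2)^(m+1) := by
  induction m with
  | zero => simp; omega
  | succ m ih =>
    have h2 : (k+2) * (2*(m+1)*(k+1)^m + k^(m+1)) ≤ (k+2) * (k+2)^(m+1) :=
      Nat.mul_le_mul_left _ ih
    have hA := auxA m k
    have hp : (k+1)^(m+1) = (k+1)*(k+1)^m := by ring
    have hk : k^(m+2) = k*k^(m+1) := by ring
    have hq : (k+2)^(m+2) = (k+2)*(k+2)^(m+1) := by ring
    nlinarith [hA, h2, hp, hk, hq]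

lemma chebCoeffBound : ∀ k ℓ : ℕ, |(Polynomial.Chebyshev.T ℝ k).coeff ℓ| ≤ (k:ℝ)^ℓ / (Nat.factorial ℓ : ℝ) := by
  intro k
  induction k using Nat.twoStepInduction with
  | zero =>
    rintro (_ | m)
    · simp [Polynomial.Chebyshev.T_zero]
    · simp [Polynomial.Chebyshev.T_zero, Polynomial.coeff_one]
  | one =>
    rintro (_ | _ | m)
    · simp [Polynomial.Chebyshev.T_one, Polynomial.coeff_X]
    · simp [Polynomial.Chebyshev.T_one, Polynomial.coeff_X]
    · simp [Polynomial.Chebyshev.T_one, Polynomial.coeff_X]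
  | more k ih1 ih2 =>
    intro ℓ
    have hrec : Polynomial.Chebyshev.T ℝ ((k:ℤ)+2)
        = 2 * Polynomial.X * Polynomial.Chebyshev.T ℝ ((k:ℤ)+1) - Polynomial.Chebyshev.T ℝ k :=
      Polynomial.Chebyshev.T_add_two ℝ k
    have hcast2 : ((k+2 : ℕ) : ℤ) = (k:ℤ)+2 := by push_cast; ring
    have hcast1 : ((k+1 : ℕ) : ℤ) = (k:ℤ)+1 := by push_cast; ring
    rw [hcast2, hrec]
    match ℓ with
    | 0 =>
      have : (2 * Polynomial.X * Polynomial.Chebyshev.T ℝ ((k:ℤ)+1) - Polynomial.Chebyshev.T ℝ k).coeff 0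
          = - (Polynomial.Chebyshev.T ℝ k).coeff 0 := by
        simp [Polynomial.coeff_sub, Polynomial.mul_coeff_zero]
      rw [this, abs_neg]
      calc |(Polynomial.Chebyshev.T ℝ k).coeff 0| ≤ (k:ℝ)^0 / (Nat.factorial 0 : ℝ) := ih1 0
        _ ≤ ((k+2:ℕ):ℝ)^0 / (Nat.factorial 0 : ℝ) := by norm_num
    | (m+1) =>
      have hco : (2 * Polynomial.X * Polynomial.Chebyshev.T ℝ ((k:ℤ)+1) - Polynomial.Chebyshev.T ℝ k).coeff (m+1)
          = 2 * (Polynomial.Chebyshev.T ℝ ((k:ℤ)+1)).coeff m - (Polynomial.Chebyshev.T ℝ k).coeff (m+1) := by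
        rw [Polynomial.coeff_sub, mul_assoc, Polynomial.coeff_ofNat_mul, Polynomial.coeff_X_mul]
      rw [hco]
      have h1 := ih2 m
      have h2 := ih1 (m+1)
      rw [hcast1] at h1
      have habs : |2 * (Polynomial.Chebyshev.T ℝ ((k:ℤ)+1)).coeff m - (Polynomial.Chebyshev.T ℝ k).coeff (m+1)|
          ≤ 2 * |(Polynomial.Chebyshev.T ℝ ((k:ℤ)+1)).coeff m| + |(Polynomial.Chebyshev.T ℝ k).coeff (m+1)| := by
        calc _ ≤ |2 * (Polynomial.Chebyshev.T ℝ ((k:ℤ)+1)).coeff m| + |(Polynomial.Chebyshev.T ℝ k).coeff (m+1)| :=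
              abs_sub _ _
          _ = _ := by rw [abs_mul, abs_two]
      have key : 2 * (((k+1:ℕ):ℝ)^m / (Nat.factorial m : ℝ)) + (k:ℝ)^(m+1) / (Nat.factorial (m+1) : ℝ)
          ≤ ((k+2:ℕ):ℝ)^(m+1) / (Nat.factorial (m+1) : ℝ) := by
        have hB := auxB m k
        have hBr : (2*((m:ℝ)+1)*((k:ℝ)+1)^m + (k:ℝ)^(m+1)) ≤ ((k:ℝ)+2)^(m+1) := by
          exact_mod_cast Nat.cast_le.mpr hB
        have hm : (0:ℝ) < (Nat.factorial m : ℝ) := by positivity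
        have hm1 : (Nat.factorial (m+1) : ℝ) = ((m:ℝ)+1) * Nat.factorial m := by
          push_cast [Nat.factorial_succ]; ring
        push_cast
        rw [hm1]
        have e1 : 2 * (((k:ℝ)+1)^m / (Nat.factorial m : ℝ))
            = (2*((m:ℝ)+1)*((k:ℝ)+1)^m) / (((m:ℝ)+1) * (Nat.factorial m : ℝ)) := by
          field_simp
        rw [e1, ← add_div]
        have hD : (0:ℝ) < ((m:ℝ)+1) * (Nat.factorial m : ℝ) := by positivity
        exact div_le_div_of_nonneg_right hBr hD.le
      calc _ ≤ 2 * |(Polynomial.Chebyshev.T ℝ ((k:ℤ)+1)).coeff m| + |(Polynomial.Chebyshev.T ℝ k).coeff (m+1)| := habs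
        _ ≤ 2 * (((k+1:ℕ):ℝ)^m / (Nat.factorial m : ℝ)) + (k:ℝ)^(m+1) / (Nat.factorial (m+1) : ℝ) := by
            linarith [h1, h2]
        _ ≤ _ := key

/-- the modified Chebyshev coefficients satisfy `|c̃(k,ℓ)| ≤ k^ℓ/ℓ!`. -/
theorem stmt_10 (k ℓ : ℕ) (h : ℓ ≤ k) :
    |chebCt k ℓ| ≤ (k : ℝ) ^ ℓ / (Nat.factorial ℓ : ℝ) := by
  unfold chebCt chebC
  split
  · exact chebCoeffBound k ℓ
  · refine (chebCoeffBound (k-1) ℓ).trans ?_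
    have hle : ((k-1:ℕ):ℝ)^ℓ ≤ (k:ℝ)^ℓ :=
      pow_le_pow_left₀ (by positivity) (by exact_mod_cast Nat.sub_le k 1) ℓ
    exact div_le_div_of_nonneg_right hle (by positivity)
end
end

section
/- Let d ≥ 2 and let B > 0 be a constant such that for every n ≥ d and every function f : {-1,1}^n → ℝ, inf_{g ∈ P_{>d}^n} ‖f − g‖_1 ≤ B · (Σ_{|S| ≤ d} |f̂(S)|^{2d/(d−1)})^{(d−1)/(2d)}. Then for every n ≥ d, every function h : {-1,1}^n → ℝ of degree at most d satisfies the discrete Bohnenblust–Hille inequality (Σ_{S ⊆ {1,…,n}} |ĥ(S)|^{2d/(d+1)})^{(d+1)/(2d)} ≤ B ‖h‖_∞. -/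
open Finset
open scoped ENNReal

noncomputable section

/-!
Duality. Put `p = 2d/(d+1)` and its conjugate exponent `q = 2d/(d-1)`. Given `h` of degree at
most `d`, the test function `f` with `f̂(S) = sign ĥ(S) |ĥ(S)|^(p-1)` for `|S| ≤ d` satisfies
`E[f h] = Σ |ĥ(S)|^p = Σ |f̂(S)|^q =: Σ`. Every `g ∈ 𝒫_{>d}` is orthogonal to `h`, so
`Σ = E[(f - g) h] ≤ ‖f - g‖₁ ‖h‖_∞`, whence `Σ ≤ dist(f, 𝒫_{>d}) ‖h‖_∞ ≤ B Σ^(1/q) ‖h‖_∞`,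
that is `Σ^(1/p) ≤ B ‖h‖_∞`.
-/

lemma sum_eq_zero_of_equiv_neg {α : Type*} [Fintype α] (e : α ≃ α) (f : α → ℝ)
    (h : ∀ a, f (e a) = -f a) : ∑ a, f a = 0 := by
  have := e.sum_comp f
  simp only [h, sum_neg_distrib] at this
  linarith

section Walsh

variable {n : ℕ}

lemma walsh_mul_self (S : Finset (Fin n)) (x : Fin n → Bool) : walsh n S x * walsh n S x = 1 := by
  rw [walsh, ← prod_mul_distrib]
  exact prod_eq_one fun i _ => by cases x i <;> norm_num

lemma walsh_update_not (S : Finset (Fin n)) (x : Fin n → Bool) (i : Fin n) :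
    walsh n S (Function.update x i (!x i)) = (if i ∈ S then -1 else 1) * walsh n S x := by
  split_ifs with hi
  · rw [walsh, walsh, ← mul_prod_erase _ _ hi, ← mul_prod_erase _ _ hi, Function.update_self,
      prod_congr rfl fun j hj => by rw [Function.update_of_ne (ne_of_mem_erase hj)]]
    cases x i <;> norm_num
  · rw [one_mul, walsh, walsh]
    exact prod_congr rfl fun j hj => by rw [Function.update_of_ne (ne_of_mem_of_not_mem hj hi)]

lemma walsh_symmDiff_singleton (S : Finset (Fin n)) (x : Fin n → Bool) (i : Fin n) :
    walsh n (symmDiff S {i}) x = (if x i then 1 else -1) * walsh n S x := by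
  by_cases hi : i ∈ S
  · have : symmDiff S {i} = S.erase i := by ext j; by_cases j = i <;> simp_all [mem_symmDiff]
    rw [this, walsh, walsh, ← mul_prod_erase _ _ hi, ← mul_assoc]
    cases x i <;> norm_num
  · have : symmDiff S {i} = insert i S := by ext j; by_cases j = i <;> simp_all [mem_symmDiff]
    rw [this, walsh, prod_insert hi, walsh]

lemma sum_walsh_mul_walsh (S T : Finset (Fin n)) :
    ∑ x, walsh n S x * walsh n T x = if S = T then 2 ^ n else 0 := by
  split_ifs with hST
  · simp [hST, walsh_mul_self, card_univ]
  obtain ⟨i, hi⟩ := symmDiff_nonempty.mpr hST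
  -- flipping a coordinate of `S ∆ T` changes the sign of exactly one factor
  have flip : Function.Involutive fun x : Fin n → Bool => Function.update x i (!x i) :=
    fun x => by ext j; by_cases hj : j = i <;> simp [hj]
  refine sum_eq_zero_of_equiv_neg flip.toPerm _ fun x => ?_
  simp only [Function.Involutive.coe_toPerm, walsh_update_not]
  rcases mem_symmDiff.mp hi with ⟨hS, hT⟩ | ⟨hS, hT⟩ <;> simp [hS, hT]

lemma sum_walsh_apply_mul_walsh_apply (x y : Fin n → Bool) :
    ∑ S, walsh n S x * walsh n S y = if x = y then 2 ^ n else 0 := by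
  split_ifs with hxy
  · simp [hxy, walsh_mul_self, Fintype.card_finset]
  obtain ⟨i, hi⟩ := Function.ne_iff.mp hxy
  have toggle : Function.Involutive fun S : Finset (Fin n) => symmDiff S {i} :=
    fun S => symmDiff_symmDiff_cancel_right _ _
  refine sum_eq_zero_of_equiv_neg toggle.toPerm _ fun S => ?_
  simp only [Function.Involutive.coe_toPerm, walsh_symmDiff_singleton]
  cases hx : x i <;> cases hy : y i <;> simp_all

lemma sum_walshCoeff_mul_walsh (f : (Fin n → Bool) → ℝ) (x : Fin n → Bool) :
    ∑ S, walshCoeff f S * walsh n S x = f x := by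
  simp_rw [walshCoeff, div_mul_eq_mul_div, ← sum_div, sum_mul, mul_assoc]
  rw [sum_comm]
  simp_rw [← mul_sum, sum_walsh_apply_mul_walsh_apply, mul_ite, mul_zero, sum_ite_eq']
  simp

lemma cubeMean_mul_eq_sum_walshCoeff_mul (f g : (Fin n → Bool) → ℝ) :
    cubeMean (fun x => f x * g x) = ∑ S, walshCoeff f S * walshCoeff g S := by
  conv_lhs => enter [1, x]; rw [← sum_walshCoeff_mul_walsh f x]
  simp only [cubeMean, sum_mul, sum_div]
  rw [sum_comm]
  refine sum_congr rfl fun S _ => ?_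
  simp_rw [← sum_div, mul_assoc, ← mul_sum, mul_div_assoc, walshCoeff, mul_comm (g _)]

lemma walshCoeff_sum_mul_walsh (A : Finset (Finset (Fin n))) (a : Finset (Fin n) → ℝ)
    (T : Finset (Fin n)) :
    walshCoeff (fun x => ∑ S ∈ A, a S * walsh n S x) T = if T ∈ A then a T else 0 := by
  simp_rw [walshCoeff, sum_mul, mul_assoc]
  rw [sum_comm]
  simp_rw [← mul_sum, sum_walsh_mul_walsh, mul_ite, mul_zero, sum_ite_eq']
  split_ifs <;> simp

lemma cubeMean_mul_eq_zero_of_disjoint {I J : Set ℕ} (hIJ : Disjoint I J)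
    {f g : (Fin n → Bool) → ℝ} (hf : spectrumIn f I) (hg : spectrumIn g J) :
    cubeMean (fun x => f x * g x) = 0 := by
  rw [cubeMean_mul_eq_sum_walshCoeff_mul]
  refine sum_eq_zero fun S _ => ?_
  by_cases hS : S.card ∈ I
  · rw [hg S (Set.disjoint_left.1 hIJ hS), mul_zero]
  · rw [hf S hS, zero_mul]

end Walsh

section Norms

variable {n : ℕ}

lemma cubeNorm_one_eq (f : (Fin n → Bool) → ℝ) : cubeNorm 1 f = cubeMean fun x => |f x| := by
  simp [cubeNorm, cubeMean]

lemma abs_le_cubeNorm_top (f : (Fin n → Bool) → ℝ) (x : Fin n → Bool) : |f x| ≤ cubeNorm ⊤ f := by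
  rw [cubeNorm, if_pos rfl]
  exact le_sup' (fun x => |f x|) (mem_univ x)

lemma cubeNorm_top_nonneg (f : (Fin n → Bool) → ℝ) : 0 ≤ cubeNorm ⊤ f :=
  (abs_nonneg _).trans (abs_le_cubeNorm_top f fun _ => false)

lemma cubeMean_mul_le_cubeNorm_one_mul_cubeNorm_top (f g : (Fin n → Bool) → ℝ) :
    cubeMean (fun x => f x * g x) ≤ cubeNorm 1 f * cubeNorm ⊤ g := by
  rw [cubeNorm_one_eq, cubeMean, cubeMean, div_mul_eq_mul_div, sum_mul]
  gcongr ?_ / _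
  refine sum_le_sum fun x _ => ?_
  calc f x * g x ≤ |f x| * |g x| := by rw [← abs_mul]; exact le_abs_self _
    _ ≤ |f x| * cubeNorm ⊤ g := by gcongr; exact abs_le_cubeNorm_top g x

lemma cubeMean_mul_le_distFromTail_mul {k : ℕ} (f : (Fin n → Bool) → ℝ)
    {h : (Fin n → Bool) → ℝ} (hh : spectrumIn h {j | j ≤ k}) :
    cubeMean (fun x => f x * h x) ≤ distFromTail k 1 f * cubeNorm ⊤ h := by
  rw [distFromTail, mul_comm, ← smul_eq_mul, ← Real.sInf_smul_of_nonneg (cubeNorm_top_nonneg h)]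
  refine le_csInf ⟨_, Set.smul_mem_smul_set ⟨0, fun S _ => by simp [walshCoeff], rfl⟩⟩ ?_
  rintro _ ⟨_, ⟨g, hg, rfl⟩, rfl⟩
  have hgh : cubeMean (fun x => g x * h x) = 0 :=
    cubeMean_mul_eq_zero_of_disjoint
      (Set.disjoint_left.mpr fun j (hj : k < j) (hj' : j ≤ k) => hj.not_ge hj') hg hh
  have hsplit : cubeMean (fun x => f x * h x)
      = cubeMean (fun x => (f x - g x) * h x) + cubeMean (fun x => g x * h x) := by
    simp only [cubeMean, ← add_div, ← sum_add_distrib, sub_mul, sub_add_cancel]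
  rw [hsplit, hgh, add_zero]
  exact (cubeMean_mul_le_cubeNorm_one_mul_cubeNorm_top _ h).trans_eq (mul_comm _ _)

end Norms

lemma abs_rpow_sub_one_mul_sign_mul_self {p : ℝ} (hp : p ≠ 0) (c : ℝ) :
    |c| ^ (p - 1) * SignType.sign c * c = |c| ^ p := by
  rcases eq_or_ne c 0 with rfl | hc
  · simp [Real.zero_rpow hp]
  · rw [mul_assoc, sign_mul_self, ← Real.rpow_add_one (abs_ne_zero.mpr hc), sub_add_cancel]

lemma abs_rpow_sub_one_mul_sign_rpow {p q : ℝ} (hp : p ≠ 0) (hq : q ≠ 0)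
    (hpq : (p - 1) * q = p) (c : ℝ) : |(|c| ^ (p - 1) * SignType.sign c)| ^ q = |c| ^ p := by
  rcases eq_or_ne c 0 with rfl | hc
  · simp [Real.zero_rpow hp, Real.zero_rpow hq]
  · have hsign : |(SignType.sign c : ℝ)| = 1 := by
      rcases hc.lt_or_gt with hc | hc
      · simp [sign_neg hc]
      · simp [sign_pos hc]
    rw [abs_mul, hsign, mul_one, abs_of_nonneg (by positivity), ← Real.rpow_mul (abs_nonneg c),
      hpq]

lemma exists_dual_of_spectrumIn {n k : ℕ} {p q : ℝ} (hp : p ≠ 0) (hq : q ≠ 0)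
    (hpq : (p - 1) * q = p) {h : (Fin n → Bool) → ℝ} (hh : spectrumIn h {j | j ≤ k}) :
    ∃ f : (Fin n → Bool) → ℝ, cubeMean (fun x => f x * h x) = ∑ S, |walshCoeff h S| ^ p ∧
      ∑ S ∈ filter (fun S : Finset (Fin n) => S.card ≤ k) univ, |walshCoeff f S| ^ q =
        ∑ S, |walshCoeff h S| ^ p := by
  set A := filter (fun S : Finset (Fin n) => S.card ≤ k) univ
  have hA : ∑ S ∈ A, |walshCoeff h S| ^ p = ∑ S, |walshCoeff h S| ^ p :=
    sum_subset (subset_univ _) fun S _ hS => by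
      rw [hh S (by simpa [A] using hS), abs_zero, Real.zero_rpow hp]
  refine ⟨fun x => ∑ S ∈ A,
    |walshCoeff h S| ^ (p - 1) * SignType.sign (walshCoeff h S) * walsh n S x, ?_, ?_⟩
  · simp_rw [cubeMean_mul_eq_sum_walshCoeff_mul, walshCoeff_sum_mul_walsh, ite_mul, zero_mul,
      sum_ite_mem, univ_inter, abs_rpow_sub_one_mul_sign_mul_self hp]
    exact hA
  · rw [← hA]
    exact sum_congr rfl fun S hS => by
      rw [walshCoeff_sum_mul_walsh, if_pos hS, abs_rpow_sub_one_mul_sign_rpow hp hq hpq]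

lemma rpow_one_sub_le_of_le_mul_rpow {s C θ : ℝ} (hs : 0 ≤ s) (hC : 0 ≤ C) (hθ : θ ≠ 1)
    (h : s ≤ C * s ^ θ) : s ^ (1 - θ) ≤ C := by
  rcases hs.eq_or_lt with rfl | hs
  · rwa [Real.zero_rpow (sub_ne_zero.mpr hθ.symm)]
  · rwa [Real.rpow_sub hs, Real.rpow_one, div_le_iff₀ (Real.rpow_pos_of_pos hs _)]

/-- the dual inequality with constant `B` implies the discrete
Bohnenblust--Hille inequality with constant `B` for polynomials of degree at most `d ≥ 2`. -/
theorem stmt_14 (d : ℕ) (hd : 2 ≤ d) (B : ℝ) (hB : 0 < B)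
    (hdual : ∀ n : ℕ, d ≤ n → ∀ f : (Fin n → Bool) → ℝ,
      distFromTail d 1 f ≤
        B * (∑ S ∈ Finset.filter (fun S : Finset (Fin n) => S.card ≤ d) Finset.univ,
          |walshCoeff f S| ^ ((2 * (d : ℝ)) / ((d : ℝ) - 1))) ^ (((d : ℝ) - 1) / (2 * (d : ℝ)))) :
    ∀ n : ℕ, d ≤ n → ∀ h : (Fin n → Bool) → ℝ, spectrumIn h {j | j ≤ d} →
      (∑ S : Finset (Fin n), |walshCoeff h S| ^ ((2 * (d : ℝ)) / ((d : ℝ) + 1))) ^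
          (((d : ℝ) + 1) / (2 * (d : ℝ))) ≤ B * cubeNorm ⊤ h := by
  intro n hn h hh
  have hd1 : (1 : ℝ) < d := by exact_mod_cast hd
  have hd1' : (d : ℝ) - 1 ≠ 0 := by linarith
  obtain ⟨f, hfh, hfq⟩ := exists_dual_of_spectrumIn (k := d) (p := 2 * d / (d + 1))
    (q := 2 * d / (d - 1)) (by positivity) (div_ne_zero (by positivity) hd1')
    (by field_simp; ring) hh
  set s := ∑ S, |walshCoeff h S| ^ (2 * (d : ℝ) / (d + 1))
  have key : s ≤ B * cubeNorm ⊤ h * s ^ (((d : ℝ) - 1) / (2 * d)) :=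
    calc s = cubeMean fun x => f x * h x := hfh.symm
      _ ≤ distFromTail d 1 f * cubeNorm ⊤ h := cubeMean_mul_le_distFromTail_mul f hh
      _ ≤ B * s ^ (((d : ℝ) - 1) / (2 * d)) * cubeNorm ⊤ h :=
        mul_le_mul_of_nonneg_right (hfq ▸ hdual n hn f) (cubeNorm_top_nonneg h)
      _ = B * cubeNorm ⊤ h * s ^ (((d : ℝ) - 1) / (2 * d)) := by ring
  have hexp : ((d : ℝ) + 1) / (2 * d) = 1 - ((d : ℝ) - 1) / (2 * d) := by field_simp; ring
  rw [hexp]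
  exact rpow_one_sub_le_of_le_mul_rpow (sum_nonneg fun S _ => by positivity)
    (mul_nonneg hB.le (cubeNorm_top_nonneg h))
    ((div_lt_one (by positivity)).mpr (by linarith)).ne key
end
end

section
/- There exists a universal constant C > 0 such that for every n ≥ 1, every k ≥ 1, and every a = (a_1, …, a_n) with a_1 ≥ a_2 ≥ … ≥ a_n ≥ 0 (with the convention a_{n+1} = 0), one has K(a, k; ℓ_2^n, ℓ_∞^n) ≤ min_{0 ≤ r ≤ n} { (Σ_{i=1}^r a_i²)^{1/2} + k·a_{r+1} } ≤ C · K(a, k; ℓ_2^n, ℓ_∞^n). -/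
open Finset
open scoped ENNReal

noncomputable section

private lemma sumA_aux {n r : ℕ} (hr : r ≤ n) (F : Fin n → ℝ) (g : ℕ → ℝ)
    (h1 : ∀ i : Fin n, (i : ℕ) < r → F i ≤ g i)
    (h2 : ∀ i : Fin n, r ≤ (i : ℕ) → F i = 0) :
    ∑ i, F i ≤ ∑ j ∈ Finset.range r, g j := by
  classical
  have e1 : ∑ i, F i = ∑ j ∈ Finset.range n, (if h : j < n then F ⟨j, h⟩ else 0) := by
    rw [← Fin.sum_univ_eq_sum_range (fun j => if h : j < n then F ⟨j, h⟩ else 0) n]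
    exact Finset.sum_congr rfl (fun i _ => by simp)
  have e2 : ∑ j ∈ Finset.range n, (if h : j < n then F ⟨j, h⟩ else 0)
      = ∑ j ∈ Finset.range r, (if h : j < n then F ⟨j, h⟩ else 0) := by
    refine (Finset.sum_subset (Finset.range_subset_range.2 hr) ?_).symm
    intro j hjn hjr
    have hjn' := Finset.mem_range.1 hjn
    rw [dif_pos hjn']
    exact h2 ⟨j, hjn'⟩ (le_of_not_gt (fun h => hjr (Finset.mem_range.2 h)))
  rw [e1, e2]
  refine Finset.sum_le_sum (fun j hj => ?_)
  have hjr := Finset.mem_range.1 hj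
  have hjn := lt_of_lt_of_le hjr hr
  rw [dif_pos hjn]
  exact h1 ⟨j, hjn⟩ hjr

private lemma sumB_aux {n r : ℕ} (hr : r ≤ n) (g : ℕ → ℝ) (F : Fin n → ℝ)
    (h1 : ∀ i : Fin n, (i : ℕ) < r → g i ≤ F i)
    (h2 : ∀ i : Fin n, 0 ≤ F i) :
    ∑ j ∈ Finset.range r, g j ≤ ∑ i, F i := by
  classical
  have e1 : ∑ i, F i = ∑ j ∈ Finset.range n, (if h : j < n then F ⟨j, h⟩ else 0) := by
    rw [← Fin.sum_univ_eq_sum_range (fun j => if h : j < n then F ⟨j, h⟩ else 0) n]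
    exact Finset.sum_congr rfl (fun i _ => by simp)
  rw [e1]
  calc ∑ j ∈ Finset.range r, g j
      ≤ ∑ j ∈ Finset.range r, (if h : j < n then F ⟨j, h⟩ else 0) := by
        refine Finset.sum_le_sum (fun j hj => ?_)
        have hjr := Finset.mem_range.1 hj
        have hjn := lt_of_lt_of_le hjr hr
        rw [dif_pos hjn]
        exact h1 ⟨j, hjn⟩ hjr
    _ ≤ ∑ j ∈ Finset.range n, (if h : j < n then F ⟨j, h⟩ else 0) := by
        refine Finset.sum_le_sum_of_subset_of_nonneg (Finset.range_subset_range.2 hr) ?_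
        intro j _ _
        split
        · exact h2 _
        · exact le_rfl

/-- for nonincreasing nonnegative `a` (with the convention `a_{n+1} = 0`),
the quantity `min_{0 ≤ r ≤ n} ((Σ_{i=1}^r a_i²)^{1/2} + k a_{r+1})` is equivalent, up to a
universal constant, to the K-functional `K(a, k; ℓ_2^n, ℓ_∞^n)`. -/
theorem stmt_16 : ∃ C : ℝ, 0 < C ∧
    ∀ n : ℕ, ∀ hn : 1 ≤ n, ∀ k : ℕ, 1 ≤ k → ∀ a : Fin n → ℝ,
      (∀ i j : Fin n, i ≤ j → a j ≤ a i) → (∀ i : Fin n, 0 ≤ a i) →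
      sInf {t : ℝ | ∃ b c : Fin n → ℝ, a = b + c ∧
          t = Real.sqrt (∑ i, (b i) ^ 2) +
            (k : ℝ) * (Finset.univ : Finset (Fin n)).sup' ⟨⟨0, hn⟩, Finset.mem_univ _⟩
              (fun i => |c i|)} ≤
        (Finset.range (n + 1)).inf' ⟨0, Finset.mem_range.mpr (Nat.succ_pos n)⟩
          (fun r => Real.sqrt (∑ i ∈ Finset.range r,
              (if h : i < n then a ⟨i, h⟩ else 0) ^ 2) +
            (k : ℝ) * (if h : r < n then a ⟨r, h⟩ else 0)) ∧
      (Finset.range (n + 1)).inf' ⟨0, Finset.mem_range.mpr (Nat.succ_pos n)⟩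
          (fun r => Real.sqrt (∑ i ∈ Finset.range r,
              (if h : i < n then a ⟨i, h⟩ else 0) ^ 2) +
            (k : ℝ) * (if h : r < n then a ⟨r, h⟩ else 0)) ≤
        C * sInf {t : ℝ | ∃ b c : Fin n → ℝ, a = b + c ∧
          t = Real.sqrt (∑ i, (b i) ^ 2) +
            (k : ℝ) * (Finset.univ : Finset (Fin n)).sup' ⟨⟨0, hn⟩, Finset.mem_univ _⟩
              (fun i => |c i|)} := by
  classical
  refine ⟨2, by norm_num, fun n hn k hk a hmono h0 => ?_⟩
  set e0 : Fin n := ⟨0, hn⟩ with he0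
  set S : Set ℝ := {t : ℝ | ∃ b c : Fin n → ℝ, a = b + c ∧
          t = Real.sqrt (∑ i, (b i) ^ 2) +
            (k : ℝ) * (Finset.univ : Finset (Fin n)).sup' ⟨⟨0, hn⟩, Finset.mem_univ _⟩
              (fun i => |c i|)} with hSdef
  have hk0 : (0 : ℝ) ≤ (k : ℝ) := Nat.cast_nonneg k
  have hbdd : BddBelow S := by
    refine ⟨0, fun t ht => ?_⟩
    obtain ⟨b, c, -, rfl⟩ := ht
    have hT0 : (0 : ℝ) ≤ (Finset.univ : Finset (Fin n)).sup'
        ⟨⟨0, hn⟩, Finset.mem_univ _⟩ (fun i => |c i|) :=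
      le_trans (abs_nonneg (c ⟨0, hn⟩)) (Finset.le_sup' (fun i => |c i|) (Finset.mem_univ ⟨0, hn⟩))
    have := Real.sqrt_nonneg (∑ i, (b i) ^ 2)
    nlinarith
  have hne : S.Nonempty := by
    refine ⟨_, a, 0, (add_zero a).symm, rfl⟩
  constructor
  · -- upper bound: K ≤ min
    obtain ⟨r, hrmem, hM⟩ := Finset.exists_mem_eq_inf'
      (⟨0, Finset.mem_range.mpr (Nat.succ_pos n)⟩ : (Finset.range (n + 1)).Nonempty)
      (fun r => Real.sqrt (∑ i ∈ Finset.range r,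
              (if h : i < n then a ⟨i, h⟩ else 0) ^ 2) +
            (k : ℝ) * (if h : r < n then a ⟨r, h⟩ else 0))
    rw [hM]
    have hr : r ≤ n := Nat.lt_succ_iff.mp (Finset.mem_range.1 hrmem)
    set s : ℝ := if h : r < n then a ⟨r, h⟩ else 0 with hs
    have hs0 : 0 ≤ s := by
      rw [hs]; split
      · exact h0 _
      · exact le_rfl
    have hals : ∀ i : Fin n, r ≤ (i : ℕ) → a i ≤ s := by
      intro i hi
      have hrn : r < n := lt_of_le_of_lt hi i.isLt
      rw [hs, dif_pos hrn]
      exact hmono ⟨r, hrn⟩ i hi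
    set b : Fin n → ℝ := fun i => a i - min (a i) s with hb
    set c : Fin n → ℝ := fun i => min (a i) s with hc
    have habc : a = b + c := by
      funext i
      show a i = (a i - min (a i) s) + min (a i) s
      ring
    have hmem : Real.sqrt (∑ i, (b i) ^ 2) +
        (k : ℝ) * (Finset.univ : Finset (Fin n)).sup' ⟨⟨0, hn⟩, Finset.mem_univ _⟩
          (fun i => |c i|) ∈ S := ⟨b, c, habc, rfl⟩
    refine le_trans (csInf_le hbdd hmem) ?_
    have h1 : Real.sqrt (∑ i, (b i) ^ 2) ≤
        Real.sqrt (∑ i ∈ Finset.range r, (if h : i < n then a ⟨i, h⟩ else 0) ^ 2) := by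
      refine Real.sqrt_le_sqrt ?_
      refine sumA_aux hr (fun i => (b i) ^ 2)
        (fun j => (if h : j < n then a ⟨j, h⟩ else 0) ^ 2) ?_ ?_
      · intro i hi
        rw [dif_pos i.isLt, Fin.eta]
        have hb0 : 0 ≤ b i := by
          show 0 ≤ a i - min (a i) s
          have := min_le_left (a i) s
          linarith
        have hba : b i ≤ a i := by
          show a i - min (a i) s ≤ a i
          have := le_min (h0 i) hs0
          linarith
        exact pow_le_pow_left₀ hb0 hba 2
      · intro i hi
        have : min (a i) s = a i := min_eq_left (hals i hi)
        show (a i - min (a i) s) ^ 2 = 0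
        rw [this]; ring
    have h2 : (Finset.univ : Finset (Fin n)).sup' ⟨⟨0, hn⟩, Finset.mem_univ _⟩
        (fun i => |c i|) ≤ s := by
      refine Finset.sup'_le _ _ (fun i _ => ?_)
      have hc0 : 0 ≤ c i := le_min (h0 i) hs0
      rw [abs_of_nonneg hc0]
      exact min_le_right _ _
    have := mul_le_mul_of_nonneg_left h2 hk0
    linarith
  · -- lower bound: min ≤ 2 K
    have key : ∀ t ∈ S,
        (Finset.range (n + 1)).inf' ⟨0, Finset.mem_range.mpr (Nat.succ_pos n)⟩
          (fun r => Real.sqrt (∑ i ∈ Finset.range r,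
              (if h : i < n then a ⟨i, h⟩ else 0) ^ 2) +
            (k : ℝ) * (if h : r < n then a ⟨r, h⟩ else 0)) / 2 ≤ t := by
      intro t ht
      obtain ⟨b, c, habc, rfl⟩ := ht
      set T : ℝ := (Finset.univ : Finset (Fin n)).sup' ⟨⟨0, hn⟩, Finset.mem_univ _⟩
          (fun i => |c i|) with hT
      have hT0 : 0 ≤ T :=
        le_trans (abs_nonneg (c ⟨0, hn⟩)) (Finset.le_sup' (fun i => |c i|) (Finset.mem_univ ⟨0, hn⟩))
      have hci : ∀ i : Fin n, |c i| ≤ T := fun i => Finset.le_sup' (fun i => |c i|) (Finset.mem_univ i)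
      have hai : ∀ i : Fin n, a i ≤ |b i| + T := by
        intro i
        have h1 : a i = b i + c i := congrFun habc i
        have h2 : b i ≤ |b i| := le_abs_self _
        have h3 : c i ≤ |c i| := le_abs_self _
        have h4 := hci i
        linarith
      obtain ⟨r, hrn, hbig, hsmall⟩ : ∃ r, r ≤ n ∧
          (∀ i : Fin n, (i : ℕ) < r → 2 * T < a i) ∧
          ((if h : r < n then a ⟨r, h⟩ else 0) ≤ 2 * T) := by
        by_cases hEx : ∃ m, ∃ hm : m < n, a ⟨m, hm⟩ ≤ 2 * T
        · obtain ⟨hfn, hfle⟩ := Nat.find_spec hEx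
          refine ⟨Nat.find hEx, le_of_lt hfn, ?_, ?_⟩
          · intro i hi
            have hmin := Nat.find_min hEx hi
            push_neg at hmin
            have := hmin i.isLt
            rw [Fin.eta] at this
            linarith
          · rw [dif_pos hfn]; exact hfle
        · push_neg at hEx
          refine ⟨n, le_rfl, ?_, ?_⟩
          · intro i _
            have := hEx i i.isLt
            rw [Fin.eta] at this
            linarith
          · rw [dif_neg (lt_irrefl n)]
            linarith
      have step1 : (Finset.range (n + 1)).inf' ⟨0, Finset.mem_range.mpr (Nat.succ_pos n)⟩
          (fun r => Real.sqrt (∑ i ∈ Finset.range r,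
              (if h : i < n then a ⟨i, h⟩ else 0) ^ 2) +
            (k : ℝ) * (if h : r < n then a ⟨r, h⟩ else 0)) ≤
          Real.sqrt (∑ i ∈ Finset.range r,
              (if h : i < n then a ⟨i, h⟩ else 0) ^ 2) +
            (k : ℝ) * (if h : r < n then a ⟨r, h⟩ else 0) :=
        Finset.inf'_le _ (Finset.mem_range.2 (Nat.lt_succ_of_le hrn))
      have hsum : ∑ i ∈ Finset.range r, (if h : i < n then a ⟨i, h⟩ else 0) ^ 2 ≤
          4 * ∑ i, (b i) ^ 2 := by
        have := sumB_aux hrn (fun j => (if h : j < n then a ⟨j, h⟩ else 0) ^ 2)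
          (fun i => 4 * (b i) ^ 2) ?_ (fun i => by positivity)
        · rw [← Finset.mul_sum] at this
          exact this
        · intro i hi
          rw [dif_pos i.isLt, Fin.eta]
          have h1 := hbig i hi
          have h2 := hai i
          have h3 : a i ≤ 2 * |b i| := by linarith
          have h4 : (a i) ^ 2 ≤ (2 * |b i|) ^ 2 :=
            pow_le_pow_left₀ (h0 i) h3 2
          have h5 : (2 * |b i|) ^ 2 = 4 * (b i) ^ 2 := by
            rw [mul_pow, sq_abs]; ring
          linarith
      have hsqrt : Real.sqrt (∑ i ∈ Finset.range r,
          (if h : i < n then a ⟨i, h⟩ else 0) ^ 2) ≤ 2 * Real.sqrt (∑ i, (b i) ^ 2) := by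
        refine le_trans (Real.sqrt_le_sqrt hsum) ?_
        rw [show (4 : ℝ) = 2 ^ 2 by norm_num, Real.sqrt_mul (by positivity),
          Real.sqrt_sq (by norm_num : (0:ℝ) ≤ 2)]
      have hkpart : (k : ℝ) * (if h : r < n then a ⟨r, h⟩ else 0) ≤ (k : ℝ) * (2 * T) :=
        mul_le_mul_of_nonneg_left hsmall hk0
      linarith
    have hle := le_csInf hne key
    linarith
end
end
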